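/- arXiv:1105.3806 — 5 statements merged into one kernel-verified Lean document; each statement's English description precedes it below -/
import Mathlib

section
/- Let s, ν ∈ ℂ, let u ∈ ℂ with |u| = 1, and define on the open unit disc D the function P(z) = ((1−|z|²)/|1−z ū|²)^s · (1−z ū)^{−ν} (using the principal branch, noting 1 − z ū ≠ 0 and the base of the first factor is positive for z ∈ D). Then the mixed Wirtinger derivative at the origin satisfies ∂_z ∂_{z̄} P (0) = s(s + ν − 1). -/
open Complex

/-- The Wirtinger derivative `∂_z f = (∂_x f − i ∂_y f)/2`. -/
noncomputable def wderiv (f : ℂ → ℂ) (z : ℂ) : ℂ :=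
  (fderiv ℝ f z 1 - Complex.I * fderiv ℝ f z Complex.I) / 2

/-- The Wirtinger derivative `∂_z̄ f = (∂_x f + i ∂_y f)/2`. -/
noncomputable def wderivBar (f : ℂ → ℂ) (z : ℂ) : ℂ :=
  (fderiv ℝ f z 1 + Complex.I * fderiv ℝ f z Complex.I) / 2

open ComplexConjugate

lemma wderiv_eq' {f : ℂ → ℂ} {x a b : ℂ} {L : ℂ →L[ℝ] ℂ} (hf : HasFDerivAt f L x)
    (h1 : L 1 = a + b) (hI : L I = a * I - b * I) :
    (fderiv ℝ f x 1 - Complex.I * fderiv ℝ f x Complex.I) / 2 = a := by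
  rw [hf.fderiv, h1, hI]
  linear_combination ((b - a)/2) * Complex.I_sq

lemma wderivBar_eq' {f : ℂ → ℂ} {x a b : ℂ} {L : ℂ →L[ℝ] ℂ} (hf : HasFDerivAt f L x)
    (h1 : L 1 = a + b) (hI : L I = a * I - b * I) :
    (fderiv ℝ f x 1 + Complex.I * fderiv ℝ f x Complex.I) / 2 = b := by
  rw [hf.fderiv, h1, hI]
  linear_combination ((a - b)/2) * Complex.I_sq

lemma cpow_sq_abs (q : ℂ) (hq : 0 < q.re) (s : ℂ) :
    ((‖q‖ ^ 2 : ℝ) : ℂ) ^ s = q ^ s * (conj q) ^ s := by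
  have hq0 : q ≠ 0 := fun h => by simp [h] at hq
  have harg : q.arg ≠ Real.pi := by
    intro h
    rw [Complex.arg_eq_pi_iff] at h
    linarith [h.1]
  have hc0 : (conj q : ℂ) ≠ 0 := by simpa using hq0
  have habs : (0:ℝ) < ‖q‖ := norm_pos_iff.mpr hq0
  have hb0 : ((‖q‖ ^ 2 : ℝ) : ℂ) ≠ 0 := by
    simp [Complex.ofReal_ne_zero, pow_eq_zero_iff, norm_ne_zero_iff.mpr hq0]
  rw [Complex.cpow_def_of_ne_zero hb0, Complex.cpow_def_of_ne_zero hq0,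
    Complex.cpow_def_of_ne_zero hc0, ← Complex.exp_add, ← add_mul]
  congr 1
  rw [Complex.log_conj q harg, Complex.add_conj, Complex.log_re]
  rw [← Complex.ofReal_log (by positivity), Real.log_pow]
  push_cast
  ring
noncomputable def K : ℂ →L[ℝ] ℂ := Complex.conjCLE.toContinuousLinearMap

lemma K_apply (v : ℂ) : K v = conj v := rfl

lemma hK (z : ℂ) : HasFDerivAt (fun w : ℂ => conj w) K z := K.hasFDerivAt

lemma hm (z : ℂ) : HasFDerivAt (fun w : ℂ => w * conj w)
    (z • K + conj z • ContinuousLinearMap.id ℝ ℂ) z :=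
  (hasFDerivAt_id z).mul (hK z)

lemma mem_slit {w : ℂ} (h : ‖w‖ < 1) : 1 - w ∈ Complex.slitPlane := by
  rw [Complex.mem_slitPlane_iff]
  left
  have := Complex.re_le_norm w
  simp only [Complex.sub_re, Complex.one_re]
  linarith

lemma hA (c w : ℂ) (h : ‖w‖ < 1) :
    HasDerivAt (fun t : ℂ => (1 - t) ^ c) (c * (1 - w) ^ (c - 1) * (-1)) w :=
  ((hasDerivAt_id w).const_sub 1).cpow_const (mem_slit h)

lemma hAm (c z : ℂ) (h : ‖z * conj z‖ < 1) :
    HasFDerivAt (fun w : ℂ => (1 - w * conj w) ^ c)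
      ((c * (1 - z * conj z) ^ (c - 1) * (-1)) • (z • K + conj z • ContinuousLinearMap.id ℝ ℂ)) z :=
  by have := (hA c (z * conj z) h).comp_hasFDerivAt z (hm z); exact this

lemma hB (c v z : ℂ) (h : ‖z * v‖ < 1) :
    HasFDerivAt (fun w : ℂ => (1 - w * v) ^ c)
      ((ContinuousLinearMap.smulRight (1 : ℂ →L[ℂ] ℂ)
        (c * (1 - z * v) ^ (c - 1) * (-v))).restrictScalars ℝ) z :=
  by simpa [ContinuousLinearMap.smulRight_one_eq_toSpanSingleton] using ((((hasDerivAt_id z).mul_const v).const_sub 1).cpow_const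
    (mem_slit h)).hasFDerivAt.restrictScalars ℝ

lemma hC (c v z : ℂ) (h : ‖conj z * v‖ < 1) :
    HasFDerivAt (fun w : ℂ => (1 - conj w * v) ^ c)
      (-((c * (1 - conj z * v) ^ (c - 1) * v) • K)) z :=
  by simpa [Function.comp_def, neg_smul] using ((((hasDerivAt_id (conj z)).mul_const v).const_sub 1).cpow_const
    (c := c) (mem_slit h)).comp_hasFDerivAt z (hK z)


noncomputable def gfun (s ν u : ℂ) (z : ℂ) : ℂ :=
  s * u * ((1 - z * conj z) ^ s * (1 - z * conj u) ^ (-s - ν) * (1 - conj z * u) ^ (-s - 1))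
  - s * (z * ((1 - z * conj z) ^ (s - 1) * (1 - z * conj u) ^ (-s - ν) * (1 - conj z * u) ^ (-s)))

lemma stage1 (s ν u z : ℂ) (hu : ‖u‖ = 1) (hz : ‖z‖ < 1) :
    (fderiv ℝ (fun w : ℂ => (1 - w * conj w) ^ s * (1 - w * conj u) ^ (-s - ν)
        * (1 - conj w * u) ^ (-s)) z 1
      + Complex.I * fderiv ℝ (fun w : ℂ => (1 - w * conj w) ^ s * (1 - w * conj u) ^ (-s - ν)
        * (1 - conj w * u) ^ (-s)) z Complex.I) / 2 = gfun s ν u z := by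
  have h1 : ‖z * conj z‖ < 1 := by
    rw [norm_mul, Complex.norm_conj]
    nlinarith [norm_nonneg z]
  have h2 : ‖z * conj u‖ < 1 := by
    rw [norm_mul, Complex.norm_conj, hu, mul_one]; exact hz
  have h3 : ‖conj z * u‖ < 1 := by
    rw [norm_mul, Complex.norm_conj, hu, mul_one]; exact hz
  have HD := ((hAm s z h1).mul (hB (-s - ν) (conj u) z h2)).mul (hC (-s) u z h3)
  refine wderivBar_eq'
    (a := (s + ν) * conj u * ((1 - z * conj z) ^ s * (1 - z * conj u) ^ (-s - ν - 1)
        * (1 - conj z * u) ^ (-s))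
      - s * (conj z * ((1 - z * conj z) ^ (s - 1) * (1 - z * conj u) ^ (-s - ν)
        * (1 - conj z * u) ^ (-s)))) HD ?_ ?_
  · simp only [Pi.mul_apply, ContinuousLinearMap.add_apply, ContinuousLinearMap.smul_apply,
      ContinuousLinearMap.neg_apply, ContinuousLinearMap.coe_restrictScalars',
      ContinuousLinearMap.smulRight_apply, ContinuousLinearMap.one_apply,
      ContinuousLinearMap.id_apply, K_apply, smul_eq_mul, map_one, mul_one, one_mul]
    unfold gfun
    ring
  · simp only [Pi.mul_apply, ContinuousLinearMap.add_apply, ContinuousLinearMap.smul_apply,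
      ContinuousLinearMap.neg_apply, ContinuousLinearMap.coe_restrictScalars',
      ContinuousLinearMap.smulRight_apply, ContinuousLinearMap.one_apply,
      ContinuousLinearMap.id_apply, K_apply, smul_eq_mul, Complex.conj_I]
    unfold gfun
    ring

lemma stage2 (s ν u : ℂ) (hcu : conj u * u = 1) :
    (fderiv ℝ (gfun s ν u) 0 1 - Complex.I * fderiv ℝ (gfun s ν u) 0 Complex.I) / 2
      = s * (s + ν - 1) := by
  have h0 : ‖(0:ℂ) * conj (0:ℂ)‖ < 1 := by simp
  have h0b : ‖(0:ℂ) * conj u‖ < 1 := by simp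
  have h0c : ‖conj (0:ℂ) * u‖ < 1 := by simp
  have T1 := (((hAm s 0 h0).mul (hB (-s - ν) (conj u) 0 h0b)).mul
    (hC (-s - 1) u 0 h0c)).const_mul (s * u)
  have T2 := ((hasFDerivAt_id (0:ℂ)).mul (((hAm (s - 1) 0 h0).mul
    (hB (-s - ν) (conj u) 0 h0b)).mul (hC (-s) u 0 h0c))).const_mul s
  have HD := T1.sub T2
  refine wderiv_eq' (a := s * (s + ν - 1)) (b := s * (s + 1) * u * u) HD ?_ ?_
  · simp only [Pi.mul_apply, ContinuousLinearMap.add_apply, ContinuousLinearMap.smul_apply,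
      ContinuousLinearMap.sub_apply, ContinuousLinearMap.neg_apply,
      ContinuousLinearMap.coe_restrictScalars', ContinuousLinearMap.smulRight_apply,
      ContinuousLinearMap.one_apply, ContinuousLinearMap.id_apply, K_apply, smul_eq_mul,
      map_one, map_zero, mul_zero, zero_mul, mul_one, one_mul, sub_zero, zero_add, add_zero,
      Complex.one_cpow, zero_smul, smul_zero, Complex.conj_I, id_eq]
    ring_nf
    linear_combination (s * (s + ν)) * hcu
  · simp only [Pi.mul_apply, ContinuousLinearMap.add_apply, ContinuousLinearMap.smul_apply,
      ContinuousLinearMap.sub_apply, ContinuousLinearMap.neg_apply,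
      ContinuousLinearMap.coe_restrictScalars', ContinuousLinearMap.smulRight_apply,
      ContinuousLinearMap.one_apply, ContinuousLinearMap.id_apply, K_apply, smul_eq_mul,
      map_one, map_zero, mul_zero, zero_mul, mul_one, one_mul, sub_zero, zero_add, add_zero,
      Complex.one_cpow, zero_smul, smul_zero, Complex.conj_I, id_eq]
    ring_nf
    linear_combination (s * (s + ν) * Complex.I) * hcu

lemma Pident (s ν u : ℂ) (hu : ‖u‖ = 1) (z : ℂ) (hz : ‖z‖ < 1) :
    (((1 - ‖z‖ ^ 2) / ‖1 - z * conj u‖ ^ 2 : ℝ) : ℂ) ^ s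
        * (1 - z * conj u) ^ (-ν)
    = (1 - z * conj z) ^ s * (1 - z * conj u) ^ (-s - ν) * (1 - conj z * u) ^ (-s) := by
  set q : ℂ := 1 - z * conj u with hqdef
  have hzu : ‖z * conj u‖ < 1 := by
    rw [norm_mul, Complex.norm_conj, hu, mul_one]; exact hz
  have hqre : 0 < q.re := by
    have h1 : (z * conj u).re ≤ ‖z * conj u‖ := Complex.re_le_norm _
    simp only [hqdef, Complex.sub_re, Complex.one_re]
    linarith
  have hq0 : q ≠ 0 := fun h => by simp [h] at hqre
  have ha : (0:ℝ) < 1 - ‖z‖ ^ 2 := by nlinarith [norm_nonneg z]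
  have hb : (0:ℝ) < ‖q‖ ^ 2 := by
    have := norm_pos_iff.mpr hq0; positivity
  have hsplit : (((1 - ‖z‖ ^ 2) / ‖q‖ ^ 2 : ℝ) : ℂ) ^ s
      = ((1 - ‖z‖ ^ 2 : ℝ) : ℂ) ^ s * (((‖q‖ ^ 2 : ℝ) : ℂ) ^ s)⁻¹ := by
    rw [div_eq_mul_inv, show ((1 - ‖z‖ ^ 2) * (‖q‖ ^ 2)⁻¹ : ℝ) =
        ((1 - ‖z‖ ^ 2) : ℝ) * ((‖q‖ ^ 2)⁻¹ : ℝ) from rfl]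
    rw [Complex.ofReal_mul, Complex.mul_cpow_ofReal_nonneg ha.le (by positivity)]
    congr 1
    rw [Complex.ofReal_inv, Complex.inv_cpow]
    rw [Complex.arg_ofReal_of_nonneg hb.le]
    exact Real.pi_ne_zero.symm
  have hA : ((1 - ‖z‖ ^ 2 : ℝ) : ℂ) = 1 - z * conj z := by
    rw [Complex.mul_conj, Complex.normSq_eq_norm_sq]
    push_cast
    ring
  have hQ : ((‖q‖ ^ 2 : ℝ) : ℂ) ^ s = q ^ s * (conj q) ^ s := by
    exact cpow_sq_abs q hqre s
  have hcq : (conj q : ℂ) = 1 - conj z * u := by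
    simp [hqdef, map_sub, map_mul]
  rw [hsplit, hA, hQ, mul_inv]
  rw [show (-s - ν) = (-s) + (-ν) by ring, Complex.cpow_add _ _ hq0, hcq]
  rw [Complex.cpow_neg q s, Complex.cpow_neg (1 - conj z * u) s]
  rw [← hcq]
  ring


/-- For `P(z) = ((1−|z|²)/|1−z ū|²)^s (1−z ū)^{−ν}` with `|u| = 1`, the mixed
Wirtinger derivative at the origin satisfies `∂_z ∂_z̄ P(0) = s(s + ν − 1)`. -/
theorem stmt_11 (s ν : ℂ) (u : ℂ) (hu : ‖u‖ = 1)
    (P : ℂ → ℂ)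
    (hP : ∀ z : ℂ, P z =
      (((1 - ‖z‖ ^ 2) / ‖1 - z * (starRingEnd ℂ u)‖ ^ 2 : ℝ) : ℂ) ^ s
        * (1 - z * (starRingEnd ℂ u)) ^ (-ν)) :
    wderiv (fun z => wderivBar P z) 0 = s * (s + ν - 1) := by
  have hcu : conj u * u = 1 := by
    rw [mul_comm, Complex.mul_conj, Complex.normSq_eq_norm_sq, hu]
    norm_num
  have hball : ∀ z : ℂ, ‖z‖ < 1 → {w : ℂ | ‖w‖ < 1} ∈ nhds z := by
    intro z hz
    have hset : {w : ℂ | ‖w‖ < 1} = Metric.ball (0:ℂ) 1 := by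
      ext w
      simp [Metric.mem_ball, Complex.dist_eq]
    rw [hset]
    exact Metric.isOpen_ball.mem_nhds (by simpa [Metric.mem_ball, Complex.dist_eq] using hz)
  have hPeq : ∀ z : ℂ, ‖z‖ < 1 → P z =
      (1 - z * conj z) ^ s * (1 - z * conj u) ^ (-s - ν) * (1 - conj z * u) ^ (-s) := by
    intro z hz
    rw [hP]
    exact Pident s ν u hu z hz
  have hg : ∀ z : ℂ, ‖z‖ < 1 → wderivBar P z = gfun s ν u z := by
    intro z hz
    have hEv : P =ᶠ[nhds z] (fun w : ℂ => (1 - w * conj w) ^ s * (1 - w * conj u) ^ (-s - ν)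
        * (1 - conj w * u) ^ (-s)) := by
      filter_upwards [hball z hz] with w hw using hPeq w hw
    unfold wderivBar
    rw [hEv.fderiv_eq]
    exact stage1 s ν u z hu hz
  have hEv0 : (fun z => wderivBar P z) =ᶠ[nhds (0:ℂ)] gfun s ν u := by
    filter_upwards [hball 0 (by simp)] with w hw using hg w hw
  unfold wderiv
  rw [hEv0.fderiv_eq]
  exact stage2 s ν u hcu
end

section
/- Let s, ν ∈ ℂ and u ∈ ℂ with |u| = 1, and let P(z) = ((1−|z|²)/|1−z ū|²)^s (1−z ū)^{−ν} on the open unit disc D. Then P satisfies on all of D the partial differential equation (1−|z|²)² ∂_z ∂_{z̄} P − ν z̄ (1−|z|²) ∂_{z̄} P = s(s − 1 + ν) P. -/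
open Complex

lemma wderiv_of {f : ℂ → ℂ} {L : ℂ →L[ℝ] ℂ} {z : ℂ} (h : HasFDerivAt f L z) :
    wderiv f z = (L 1 - Complex.I * L Complex.I) / 2 := by
  simp only [wderiv, h.fderiv]

lemma wderivBar_of {f : ℂ → ℂ} {L : ℂ →L[ℝ] ℂ} {z : ℂ} (h : HasFDerivAt f L z) :
    wderivBar f z = (L 1 + Complex.I * L Complex.I) / 2 := by
  simp only [wderivBar, h.fderiv]

-- disc facts
lemma disc_a_eq (z : ℂ) : (1 : ℂ) - z * (starRingEnd ℂ) z = ((1 - ‖z‖ ^ 2 : ℝ) : ℂ) := by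
  rw [Complex.mul_conj]
  push_cast [Complex.sq_norm]
  ring

lemma disc_a0 {z : ℂ} (hz : ‖z‖ < 1) : (1 : ℂ) - z * (starRingEnd ℂ) z ≠ 0 := by
  rw [disc_a_eq]
  simp only [ne_eq, Complex.ofReal_eq_zero]
  nlinarith [norm_nonneg z]

lemma disc_aslit {z : ℂ} (hz : ‖z‖ < 1) :
    (1 : ℂ) - z * (starRingEnd ℂ) z ∈ Complex.slitPlane := by
  rw [disc_a_eq, Complex.mem_slitPlane_iff]
  left
  simp only [Complex.ofReal_re]
  nlinarith [norm_nonneg z]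

lemma disc_bre {z u : ℂ} (hu : ‖u‖ = 1) (hz : ‖z‖ < 1) :
    0 < ((1 : ℂ) - z * (starRingEnd ℂ) u).re := by
  have h1 : ‖z * (starRingEnd ℂ) u‖ < 1 := by
    rw [norm_mul, Complex.norm_conj, hu, mul_one]; exact hz
  have := Complex.re_le_norm (z * (starRingEnd ℂ) u)
  simp only [Complex.sub_re, Complex.one_re]
  linarith

lemma disc_bslit {z u : ℂ} (hu : ‖u‖ = 1) (hz : ‖z‖ < 1) :
    (1 : ℂ) - z * (starRingEnd ℂ) u ∈ Complex.slitPlane :=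
  Complex.mem_slitPlane_iff.2 (Or.inl (disc_bre hu hz))

lemma disc_b0 {z u : ℂ} (hu : ‖u‖ = 1) (hz : ‖z‖ < 1) :
    (1 : ℂ) - z * (starRingEnd ℂ) u ≠ 0 :=
  Complex.slitPlane_ne_zero (disc_bslit hu hz)

lemma disc_c_eq (z u : ℂ) :
    (1 : ℂ) - (starRingEnd ℂ) z * u = (starRingEnd ℂ) ((1 : ℂ) - z * (starRingEnd ℂ) u) := by
  simp [map_sub, map_mul]

lemma disc_cslit {z u : ℂ} (hu : ‖u‖ = 1) (hz : ‖z‖ < 1) :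
    (1 : ℂ) - (starRingEnd ℂ) z * u ∈ Complex.slitPlane := by
  rw [Complex.mem_slitPlane_iff]
  left
  rw [disc_c_eq, Complex.conj_re]
  exact disc_bre hu hz

lemma disc_c0 {z u : ℂ} (hu : ‖u‖ = 1) (hz : ‖z‖ < 1) :
    (1 : ℂ) - (starRingEnd ℂ) z * u ≠ 0 :=
  Complex.slitPlane_ne_zero (disc_cslit hu hz)

noncomputable def QQ (s ν u z : ℂ) : ℂ :=
  Complex.exp (s * Complex.log (1 - z * (starRingEnd ℂ) z)
    + (-s - ν) * Complex.log (1 - z * (starRingEnd ℂ) u)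
    + (-s) * Complex.log (1 - (starRingEnd ℂ) z * u))

lemma P_eq_QQ (s ν u z : ℂ) (hu : ‖u‖ = 1) (hz : ‖z‖ < 1) :
    (((1 - ‖z‖ ^ 2) / ‖1 - z * (starRingEnd ℂ) u‖ ^ 2 : ℝ) : ℂ) ^ s
        * (1 - z * (starRingEnd ℂ) u) ^ (-ν) = QQ s ν u z := by
  set w : ℂ := 1 - z * (starRingEnd ℂ) u with hw
  have hw0 : w ≠ 0 := disc_b0 hu hz
  have hwabs : 0 < ‖w‖ := norm_pos_iff.mpr hw0
  have hr : 0 < 1 - ‖z‖ ^ 2 := by nlinarith [norm_nonneg z]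
  have hρ : 0 < (1 - ‖z‖ ^ 2) / ‖w‖ ^ 2 := by positivity
  have hρ0 : (((1 - ‖z‖ ^ 2) / ‖w‖ ^ 2 : ℝ) : ℂ) ≠ 0 := by
    exact_mod_cast ne_of_gt hρ
  rw [Complex.cpow_def_of_ne_zero hρ0, Complex.cpow_def_of_ne_zero hw0, ← Complex.exp_add, QQ]
  congr 1
  have hlogρ : Complex.log (((1 - ‖z‖ ^ 2) / ‖w‖ ^ 2 : ℝ) : ℂ)
      = ((Real.log (1 - ‖z‖ ^ 2) : ℝ) : ℂ) - ((Real.log (‖w‖ ^ 2) : ℝ) : ℂ) := by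
    rw [← Complex.ofReal_log hρ.le, Real.log_div (ne_of_gt hr) (by positivity)]
    push_cast
    ring
  have hloga : Complex.log ((1 : ℂ) - z * (starRingEnd ℂ) z)
      = ((Real.log (1 - ‖z‖ ^ 2) : ℝ) : ℂ) := by
    rw [disc_a_eq, ← Complex.ofReal_log hr.le]
  have hargw : w.arg ≠ Real.pi := Complex.slitPlane_arg_ne_pi (disc_bslit hu hz)
  have hlogc : Complex.log ((1 : ℂ) - (starRingEnd ℂ) z * u) = (starRingEnd ℂ) (Complex.log w) := by
    rw [disc_c_eq, Complex.log_conj _ hargw]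
  have hsum : Complex.log w + (starRingEnd ℂ) (Complex.log w)
      = ((Real.log (‖w‖ ^ 2) : ℝ) : ℂ) := by
    rw [Complex.add_conj, Complex.log_re, Real.log_pow]
    push_cast
    ring
  rw [hlogρ, hloga, hlogc, ← hsum]
  ring

lemma hasFDerivAt_QQ (s ν u z : ℂ) (hu : ‖u‖ = 1) (hz : ‖z‖ < 1) :
    HasFDerivAt (QQ s ν u)
      ((QQ s ν u z) •
        ((s • (((1 : ℂ) - z * (starRingEnd ℂ) z)⁻¹ •
            (-(z • (Complex.conjCLE : ℂ →L[ℝ] ℂ) + ((starRingEnd ℂ) z) • (ContinuousLinearMap.id ℝ ℂ)))))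
         + ((-s - ν) • (((1 : ℂ) - z * (starRingEnd ℂ) u)⁻¹ •
            (-(((starRingEnd ℂ) u) • (ContinuousLinearMap.id ℝ ℂ)))))
         + ((-s) • (((1 : ℂ) - (starRingEnd ℂ) z * u)⁻¹ •
            (-(u • (Complex.conjCLE : ℂ →L[ℝ] ℂ))))))) z := by
  have hconj : HasFDerivAt (fun y : ℂ => (starRingEnd ℂ) y) (Complex.conjCLE : ℂ →L[ℝ] ℂ) z :=
    Complex.conjCLE.hasFDerivAt
  have ha : HasFDerivAt (fun y : ℂ => 1 - y * (starRingEnd ℂ) y)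
      (-(z • (Complex.conjCLE : ℂ →L[ℝ] ℂ) + ((starRingEnd ℂ) z) • (ContinuousLinearMap.id ℝ ℂ))) z :=
    ((hasFDerivAt_id z).mul hconj).const_sub 1
  have hb : HasFDerivAt (fun y : ℂ => 1 - y * (starRingEnd ℂ) u)
      (-(((starRingEnd ℂ) u) • (ContinuousLinearMap.id ℝ ℂ))) z :=
    ((hasFDerivAt_id z).mul_const _).const_sub 1
  have hc : HasFDerivAt (fun y : ℂ => 1 - (starRingEnd ℂ) y * u)
      (-(u • (Complex.conjCLE : ℂ →L[ℝ] ℂ))) z :=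
    (hconj.mul_const _).const_sub 1
  have hla := ((Complex.hasDerivAt_log (disc_aslit hz)).comp_hasFDerivAt z ha).const_mul s
  have hlb := ((Complex.hasDerivAt_log (disc_bslit hu hz)).comp_hasFDerivAt z hb).const_mul (-s - ν)
  have hlc := ((Complex.hasDerivAt_log (disc_cslit hu hz)).comp_hasFDerivAt z hc).const_mul (-s)
  exact (Complex.hasDerivAt_exp _).comp_hasFDerivAt z ((hla.add hlb).add hlc)

lemma wderivBar_QQ (s ν u z : ℂ) (hu : ‖u‖ = 1) (hz : ‖z‖ < 1) :
    wderivBar (QQ s ν u) z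
      = QQ s ν u z * (s * (u - z) *
          (((1 : ℂ) - z * (starRingEnd ℂ) z) * ((1 : ℂ) - (starRingEnd ℂ) z * u))⁻¹) := by
  rw [wderivBar_of (hasFDerivAt_QQ s ν u z hu hz)]
  have ha0 := disc_a0 hz
  have hc0 := disc_c0 hu hz
  simp only [ContinuousLinearMap.smul_apply, ContinuousLinearMap.add_apply,
    ContinuousLinearMap.neg_apply, ContinuousLinearMap.id_apply, ContinuousLinearEquiv.coe_coe, Complex.conjCLE_apply,
    smul_eq_mul, map_one, Complex.conj_I]
  field_simp
  ring_nf
  simp only [Complex.I_sq]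
  ring

noncomputable def HH (s ν u w : ℂ) : ℂ :=
  QQ s ν u w * (s * (u - w) *
    (((1 : ℂ) - w * (starRingEnd ℂ) w) * ((1 : ℂ) - (starRingEnd ℂ) w * u))⁻¹)

lemma alg (Q s ν z zb u ub A B C : ℂ) (hA0 : A ≠ 0) (hB0 : B ≠ 0) (hC0 : C ≠ 0)
    (hA : A = 1 - z * zb) (hB : B = 1 - z * ub) (hC : C = 1 - zb * u) (hu : u * ub = 1) :
    A ^ 2 * (Q * (((-s * zb * B + (s + ν) * ub * A) * (s * (u - z)) - s * A * B
        + s * (u - z) * zb * B) * (A ^ 2 * B * C)⁻¹))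
      - ν * zb * A * (Q * (s * (u - z) * (A * C)⁻¹)) = s * (s - 1 + ν) * Q := by
  subst hA hB hC
  field_simp
  have hden : (1 - z * zb) ^ 2 * (1 - z * ub) * (1 - zb * u) * ((1 - z * zb) * (1 - zb * u)) ≠ 0 :=
    mul_ne_zero (mul_ne_zero (mul_ne_zero (pow_ne_zero 2 hA0) hB0) hC0) (mul_ne_zero hA0 hC0)
  linear_combination (Q * s * (s + ν) * (1 - z * zb)) * hu

lemma wderiv_mul {f g : ℂ → ℂ} {Lf Lg : ℂ →L[ℝ] ℂ} {z : ℂ}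
    (hf : HasFDerivAt f Lf z) (hg : HasFDerivAt g Lg z) :
    wderiv (fun w => f w * g w) z = f z * wderiv g z + g z * wderiv f z := by
  rw [wderiv_of (f := fun w => f w * g w) (hf.mul hg), wderiv_of hf, wderiv_of hg]
  simp only [ContinuousLinearMap.add_apply, ContinuousLinearMap.smul_apply, smul_eq_mul]
  ring

lemma wderiv_QQ (s ν u z : ℂ) (hu : ‖u‖ = 1) (hz : ‖z‖ < 1) :
    wderiv (QQ s ν u) z
      = QQ s ν u z * (-s * (starRingEnd ℂ) z * ((1 : ℂ) - z * (starRingEnd ℂ) z)⁻¹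
          + (s + ν) * (starRingEnd ℂ) u * ((1 : ℂ) - z * (starRingEnd ℂ) u)⁻¹) := by
  rw [wderiv_of (hasFDerivAt_QQ s ν u z hu hz)]
  have ha0 := disc_a0 hz
  have hb0 := disc_b0 hu hz
  have hc0 := disc_c0 hu hz
  simp only [ContinuousLinearMap.smul_apply, ContinuousLinearMap.add_apply,
    ContinuousLinearMap.neg_apply, ContinuousLinearMap.id_apply, ContinuousLinearEquiv.coe_coe, Complex.conjCLE_apply,
    smul_eq_mul, map_one, Complex.conj_I]
  field_simp
  ring_nf
  simp only [Complex.I_sq]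
  ring

lemma hasFDerivAt_RR (s u z : ℂ) (hu : ‖u‖ = 1) (hz : ‖z‖ < 1) :
    HasFDerivAt (fun w : ℂ => s * (u - w) *
        (((1 : ℂ) - w * (starRingEnd ℂ) w) * ((1 : ℂ) - (starRingEnd ℂ) w * u))⁻¹)
      ((s * (u - z)) •
          (-((((1 : ℂ) - z * (starRingEnd ℂ) z) * ((1 : ℂ) - (starRingEnd ℂ) z * u)) ^ 2)⁻¹ •
            (((1 : ℂ) - z * (starRingEnd ℂ) z) • -(u • (Complex.conjCLE : ℂ →L[ℝ] ℂ)) +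
              ((1 : ℂ) - (starRingEnd ℂ) z * u) •
                -(z • (Complex.conjCLE : ℂ →L[ℝ] ℂ) +
                  ((starRingEnd ℂ) z) • (ContinuousLinearMap.id ℝ ℂ)))) +
        ((((1 : ℂ) - z * (starRingEnd ℂ) z) * ((1 : ℂ) - (starRingEnd ℂ) z * u))⁻¹) •
          (s • (-(ContinuousLinearMap.id ℝ ℂ)))) z := by
  have hconj : HasFDerivAt (fun y : ℂ => (starRingEnd ℂ) y) (Complex.conjCLE : ℂ →L[ℝ] ℂ) z :=
    Complex.conjCLE.hasFDerivAt
  have ha : HasFDerivAt (fun y : ℂ => 1 - y * (starRingEnd ℂ) y)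
      (-(z • (Complex.conjCLE : ℂ →L[ℝ] ℂ) + ((starRingEnd ℂ) z) • (ContinuousLinearMap.id ℝ ℂ))) z :=
    ((hasFDerivAt_id z).mul hconj).const_sub 1
  have hc : HasFDerivAt (fun y : ℂ => 1 - (starRingEnd ℂ) y * u)
      (-(u • (Complex.conjCLE : ℂ →L[ℝ] ℂ))) z :=
    (hconj.mul_const _).const_sub 1
  have hac0 : ((1 : ℂ) - z * (starRingEnd ℂ) z) * ((1 : ℂ) - (starRingEnd ℂ) z * u) ≠ 0 :=
    mul_ne_zero (disc_a0 hz) (disc_c0 hu hz)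
  have hnum : HasFDerivAt (fun y : ℂ => s * (u - y))
      (s • (-(ContinuousLinearMap.id ℝ ℂ))) z :=
    ((hasFDerivAt_id z).const_sub u).const_mul s
  have hinv := (hasDerivAt_inv hac0).comp_hasFDerivAt z (ha.mul hc)
  exact hnum.mul hinv

lemma wderiv_RR (s u z : ℂ) (hu : ‖u‖ = 1) (hz : ‖z‖ < 1) :
    wderiv (fun w : ℂ => s * (u - w) *
        (((1 : ℂ) - w * (starRingEnd ℂ) w) * ((1 : ℂ) - (starRingEnd ℂ) w * u))⁻¹) z
      = -s * (((1 : ℂ) - z * (starRingEnd ℂ) z) * ((1 : ℂ) - (starRingEnd ℂ) z * u))⁻¹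
        + s * (u - z) * (starRingEnd ℂ) z * ((1 : ℂ) - (starRingEnd ℂ) z * u) *
            ((((1 : ℂ) - z * (starRingEnd ℂ) z) * ((1 : ℂ) - (starRingEnd ℂ) z * u)) ^ 2)⁻¹ := by
  rw [wderiv_of (hasFDerivAt_RR s u z hu hz)]
  simp only [ContinuousLinearMap.smul_apply, ContinuousLinearMap.add_apply,
    ContinuousLinearMap.neg_apply, ContinuousLinearMap.id_apply, ContinuousLinearEquiv.coe_coe, Complex.conjCLE_apply,
    smul_eq_mul, map_one, Complex.conj_I]
  ring_nf
  simp only [Complex.I_sq]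
  ring

lemma wderiv_HH (s ν u z : ℂ) (hu : ‖u‖ = 1) (hz : ‖z‖ < 1) :
    wderiv (HH s ν u) z
      = QQ s ν u z *
          (((-s * (starRingEnd ℂ) z * ((1 : ℂ) - z * (starRingEnd ℂ) u)
              + (s + ν) * (starRingEnd ℂ) u * ((1 : ℂ) - z * (starRingEnd ℂ) z)) * (s * (u - z))
            - s * ((1 : ℂ) - z * (starRingEnd ℂ) z) * ((1 : ℂ) - z * (starRingEnd ℂ) u)
            + s * (u - z) * (starRingEnd ℂ) z * ((1 : ℂ) - z * (starRingEnd ℂ) u))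
           * (((1 : ℂ) - z * (starRingEnd ℂ) z) ^ 2 * ((1 : ℂ) - z * (starRingEnd ℂ) u)
              * ((1 : ℂ) - (starRingEnd ℂ) z * u))⁻¹) := by
  have hrw : wderiv (HH s ν u) z = wderiv (fun w : ℂ => QQ s ν u w * (s * (u - w) *
      (((1 : ℂ) - w * (starRingEnd ℂ) w) * ((1 : ℂ) - (starRingEnd ℂ) w * u))⁻¹)) z := rfl
  rw [hrw, wderiv_mul (hasFDerivAt_QQ s ν u z hu hz) (hasFDerivAt_RR s u z hu hz),
    wderiv_QQ s ν u z hu hz, wderiv_RR s u z hu hz]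
  have ha0 := disc_a0 hz
  have hb0 := disc_b0 hu hz
  have hc0 := disc_c0 hu hz
  field_simp
  ring

lemma key (s ν u z : ℂ) (hu : ‖u‖ = 1) (hz : ‖z‖ < 1) :
    ((1 : ℂ) - z * (starRingEnd ℂ) z) ^ 2 * wderiv (HH s ν u) z
      - ν * (starRingEnd ℂ) z * ((1 : ℂ) - z * (starRingEnd ℂ) z) * HH s ν u z
      = s * (s - 1 + ν) * QQ s ν u z := by
  have hu1 : u * (starRingEnd ℂ) u = 1 := by
    rw [Complex.mul_conj, ← Complex.sq_norm, hu]
    norm_num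
  rw [wderiv_HH s ν u z hu hz, HH]
  exact alg (QQ s ν u z) s ν z ((starRingEnd ℂ) z) u ((starRingEnd ℂ) u) _ _ _
    (disc_a0 hz) (disc_b0 hu hz) (disc_c0 hu hz) rfl rfl rfl hu1
/-- The generalized Poisson kernel `P(z) = ((1−|z|²)/|1−z ū|²)^s (1−z ū)^{−ν}`
satisfies on the unit disc the twisted Hua equation
`(1−|z|²)² ∂∂̄P − ν z̄ (1−|z|²) ∂̄P = s(s−1+ν) P`. -/
theorem stmt_12 (s ν : ℂ) (u : ℂ) (hu : ‖u‖ = 1)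
    (P : ℂ → ℂ)
    (hP : ∀ z : ℂ, P z =
      (((1 - ‖z‖ ^ 2) / ‖1 - z * (starRingEnd ℂ u)‖ ^ 2 : ℝ) : ℂ) ^ s
        * (1 - z * (starRingEnd ℂ u)) ^ (-ν)) :
    ∀ z ∈ Metric.ball (0 : ℂ) 1,
      (((1 - ‖z‖ ^ 2 : ℝ) : ℂ)) ^ 2 * wderiv (fun w => wderivBar P w) z
        - ν * (starRingEnd ℂ z) * ((1 - ‖z‖ ^ 2 : ℝ) : ℂ) * wderivBar P z
      = s * (s - 1 + ν) * P z := by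
  intro z hzball
  have hz : ‖z‖ < 1 := by simpa using mem_ball_zero_iff.1 hzball
  have hPQ : ∀ w ∈ Metric.ball (0 : ℂ) 1, P w = QQ s ν u w := by
    intro w hw
    have hw' : ‖w‖ < 1 := by simpa using mem_ball_zero_iff.1 hw
    rw [hP w]
    exact P_eq_QQ s ν u w hu hw'
  have hbar : ∀ w ∈ Metric.ball (0 : ℂ) 1, wderivBar P w = HH s ν u w := by
    intro w hw
    have hw' : ‖w‖ < 1 := by simpa using mem_ball_zero_iff.1 hw
    have heq : P =ᶠ[nhds w] QQ s ν u :=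
      Filter.eventuallyEq_of_mem (Metric.isOpen_ball.mem_nhds hw) hPQ
    have h3 : wderivBar P w = wderivBar (QQ s ν u) w := by
      simp only [wderivBar]
      rw [heq.fderiv_eq]
    rw [h3, wderivBar_QQ s ν u w hu hw', HH]
  have h2 : wderiv (fun w => wderivBar P w) z = wderiv (HH s ν u) z := by
    have heq : (fun w => wderivBar P w) =ᶠ[nhds z] HH s ν u :=
      Filter.eventuallyEq_of_mem (Metric.isOpen_ball.mem_nhds hzball) hbar
    simp only [wderiv]
    rw [heq.fderiv_eq]
  rw [h2, hbar z hzball, hP z, P_eq_QQ s ν u z hu hz, ← disc_a_eq]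
  exact key s ν u z hu hz
end

section
/- Let ν ∈ ℤ, δ ∈ ℕ, and set σ = 1 + δ − ν. Then for every z in the open unit disc, (1/2π) ∫_0^{2π} ((1−|z|²)/|1−z e^{−iθ}|²)^σ (1−z e^{−iθ})^{−ν} e^{−iδθ} dθ = ((σ)_δ / δ!) · z̄^δ / (1−|z|²)^δ, where (σ)_δ = σ(σ+1)⋯(σ+δ−1) is the Pochhammer symbol. -/
open Complex Real

lemma coef_pos (n k : ℕ) :
    (ascPochhammer ℂ k).eval ((n : ℂ) + 1) / (k.factorial : ℂ) = ((k + n).choose n : ℂ) := by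
  have h1 : ((n.factorial : ℂ)) * (ascPochhammer ℂ k).eval ((n : ℂ) + 1) = ((n + k).factorial : ℂ) := by
    exact_mod_cast factorial_mul_ascPochhammer ℂ n k
  have h2 : ((n + k).choose k : ℂ) * n.factorial * k.factorial = ((n + k).factorial : ℂ) := by
    exact_mod_cast Nat.add_choose_mul_factorial_mul_factorial n k
  have h3 : (k + n).choose n = (n + k).choose k := by
    rw [Nat.add_comm k n]
    have := Nat.choose_symm (show k ≤ n + k by omega) (n := n + k)
    simpa [Nat.add_sub_cancel] using this
  have hn : (n.factorial : ℂ) ≠ 0 := Nat.cast_ne_zero.2 n.factorial_ne_zero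
  have hk : (k.factorial : ℂ) ≠ 0 := Nat.cast_ne_zero.2 k.factorial_ne_zero
  rw [h3, div_eq_iff hk]
  apply mul_left_cancel₀ hn
  rw [← mul_assoc, h1, ← h2]; ring

lemma coef_nonpos (p k : ℕ) :
    (ascPochhammer ℂ k).eval (-(p : ℂ)) = (-1) ^ k * (p.choose k : ℂ) * (k.factorial : ℂ) := by
  rw [ascPochhammer_eval_neg_eq_descPochhammer (R := ℂ) (p : ℂ) k,
    descPochhammer_eval_eq_descFactorial ℂ p k,
    Nat.descFactorial_eq_factorial_mul_choose]
  push_cast; ring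

lemma lemA (m : ℤ) {x : ℂ} (hx : ‖x‖ < 1) :
    HasSum (fun k : ℕ => (ascPochhammer ℂ k).eval (m : ℂ) / (k.factorial : ℂ) * x ^ k)
      ((1 - x) ^ (-m)) := by
  rcases le_or_gt m 0 with hm | hm
  · -- m ≤ 0 : finite binomial expansion
    obtain ⟨p, rfl⟩ : ∃ p : ℕ, m = -(p : ℤ) := ⟨(-m).toNat, by omega⟩
    have hcoef : ∀ k : ℕ, (ascPochhammer ℂ k).eval ((-(p:ℤ) : ℤ) : ℂ) / (k.factorial : ℂ) * x ^ k
        = (p.choose k : ℂ) * (-x) ^ k := by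
      intro k
      have hk : (k.factorial : ℂ) ≠ 0 := Nat.cast_ne_zero.2 k.factorial_ne_zero
      push_cast
      rw [coef_nonpos p k]
      field_simp
      ring
    simp only [hcoef]
    have hz : ∀ k ∉ Finset.range (p + 1), (p.choose k : ℂ) * (-x) ^ k = 0 := by
      intro k hk
      simp only [Finset.mem_range, not_lt] at hk
      rw [Nat.choose_eq_zero_of_lt (by omega), Nat.cast_zero, zero_mul]
    have hs : HasSum (fun k => (p.choose k : ℂ) * (-x) ^ k) _ := hasSum_sum_of_ne_finset_zero hz
    convert hs using 1
    rw [neg_neg, zpow_natCast]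
    rw [show (1 : ℂ) - x = -x + 1 by ring, add_pow]
    apply Finset.sum_congr rfl
    intro k hk
    ring
  · -- m ≥ 1
    obtain ⟨n, rfl⟩ : ∃ n : ℕ, m = (n : ℤ) + 1 := ⟨(m - 1).toNat, by omega⟩
    have hcoef : ∀ k : ℕ, (ascPochhammer ℂ k).eval (((n : ℤ) + 1 : ℤ) : ℂ) / (k.factorial : ℂ)
        = ((k + n).choose n : ℂ) := by
      intro k
      rw [show (((n : ℤ) + 1 : ℤ) : ℂ) = (n : ℂ) + 1 by push_cast; ring]
      exact coef_pos n k
    simp only [hcoef]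
    have h1x : (1 : ℂ) - x ≠ 0 := by
      intro h
      rw [sub_eq_zero] at h
      rw [← h] at hx
      simp at hx
    have := hasSum_choose_mul_geometric_of_norm_lt_one (𝕜 := ℂ) n hx
    rw [zpow_neg, show ((n : ℤ) + 1) = ((n + 1 : ℕ) : ℤ) by push_cast; ring, zpow_natCast,
      ← one_div]
    exact this

lemma summable_norm_poch (m : ℤ) {t : ℝ} (h0 : 0 ≤ t) (h1 : t < 1) :
    Summable (fun k : ℕ => ‖(ascPochhammer ℂ k).eval (m : ℂ) / (k.factorial : ℂ)‖ * t ^ k) := by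
  rcases le_or_gt m 0 with hm | hm
  · obtain ⟨p, rfl⟩ : ∃ p : ℕ, m = -(p : ℤ) := ⟨(-m).toNat, by omega⟩
    apply summable_of_ne_finset_zero (s := Finset.range (p + 1))
    intro k hk
    simp only [Finset.mem_range, not_lt] at hk
    have hkf : (k.factorial : ℂ) ≠ 0 := Nat.cast_ne_zero.2 k.factorial_ne_zero
    have : (ascPochhammer ℂ k).eval ((-(p : ℤ) : ℤ) : ℂ) = 0 := by
      push_cast
      rw [coef_nonpos p k, Nat.choose_eq_zero_of_lt (by omega)]
      simp
    rw [this]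
    simp
  · obtain ⟨n, rfl⟩ : ∃ n : ℕ, m = (n : ℤ) + 1 := ⟨(m - 1).toNat, by omega⟩
    have hcoef : ∀ k : ℕ, ‖(ascPochhammer ℂ k).eval (((n : ℤ) + 1 : ℤ) : ℂ) / (k.factorial : ℂ)‖
        = ((k + n).choose n : ℝ) := by
      intro k
      rw [show (((n : ℤ) + 1 : ℤ) : ℂ) = (n : ℂ) + 1 by push_cast; ring, coef_pos n k]
      rw [Complex.norm_natCast]
    simp only [hcoef]
    exact summable_choose_mul_geometric_of_norm_lt_one n (by rwa [Real.norm_eq_abs, _root_.abs_of_nonneg h0])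

lemma integral_exp_int (n : ℤ) :
    (∫ θ in (0:ℝ)..(2*π), Complex.exp (Complex.I * n * θ))
      = if n = 0 then (2*π : ℂ) else 0 := by
  by_cases hn : n = 0
  · subst hn
    simp only [Int.cast_zero, mul_zero, zero_mul, Complex.exp_zero, if_true]
    rw [intervalIntegral.integral_const]
    rw [sub_zero, Complex.real_smul]
    push_cast; ring
  · rw [if_neg hn]
    have hc : (Complex.I * n : ℂ) ≠ 0 := by
      simp [Complex.I_ne_zero, Complex.ext_iff]
      exact_mod_cast hn
    have := integral_exp_mul_complex (a := (0:ℝ)) (b := 2*π) hc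
    rw [this]
    have h1 : Complex.exp ((Complex.I * n) * ((2:ℝ)*π : ℝ)) = 1 := by
      rw [show ((Complex.I * n) * ((2:ℝ)*π : ℝ) : ℂ) = n * (2 * π * Complex.I) by
        push_cast; ring]
      exact Complex.exp_int_mul_two_pi_mul_I n
    rw [h1]
    simp

open MeasureTheory in
lemma key_inner (m : ℤ) {w : ℂ} (hw : ‖w‖ < 1) (n : ℕ) :
    (∫ θ in (0:ℝ)..(2*π), Complex.exp (-(Complex.I * n * θ))
        * (1 - w * Complex.exp (Complex.I * θ)) ^ (-m))
    = (2*π : ℂ) * ((ascPochhammer ℂ n).eval (m:ℂ) / (n.factorial : ℂ) * w ^ n) := by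
  set μ : Measure ℝ := volume.restrict (Set.Ioc (0:ℝ) (2*π)) with hμ
  set c : ℕ → ℂ := fun k => (ascPochhammer ℂ k).eval (m:ℂ) / (k.factorial : ℂ) with hc
  set F : ℕ → ℝ → ℂ := fun k θ =>
    Complex.exp (-(Complex.I * n * θ)) * (c k * (w * Complex.exp (Complex.I * θ)) ^ k) with hF
  have habs : ∀ θ : ℝ, ‖w * Complex.exp (Complex.I * θ)‖ < 1 := by
    intro θ
    rw [norm_mul]
    rw [Complex.norm_exp]
    simp [hw]
  have hexp1 : ∀ θ : ℝ, ‖Complex.exp (Complex.I * θ)‖ = 1 := by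
    intro θ; rw [Complex.norm_exp]; simp
  have hptwise : ∀ θ : ℝ, HasSum (fun k => F k θ)
      (Complex.exp (-(Complex.I * n * θ)) * (1 - w * Complex.exp (Complex.I * θ)) ^ (-m)) :=
    fun θ => (lemA m (habs θ)).mul_left _
  have hcont : ∀ k, Continuous (F k) := by
    intro k
    apply Continuous.mul
    · exact Complex.continuous_exp.comp (by continuity)
    · apply continuous_const.mul
      exact (Continuous.mul continuous_const
        (Complex.continuous_exp.comp (by continuity))).pow k
  have hint : ∀ k, Integrable (F k) μ := fun k => (hcont k).integrableOn_Ioc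
  have hnormF : ∀ k, ∀ θ : ℝ, ‖F k θ‖ = ‖c k‖ * (‖w‖) ^ k := by
    intro k θ
    rw [hF]
    simp only [norm_mul, norm_pow]
    rw [Complex.norm_exp, hexp1]
    simp
  have hμuniv : (μ Set.univ).toReal = 2*π := by
    rw [hμ]
    simp [Real.volume_Ioc, ENNReal.toReal_ofReal (by positivity : (0:ℝ) ≤ 2*π), Real.pi_nonneg]
  have hintnorm : ∀ k, (∫ θ, ‖F k θ‖ ∂μ) = (2*π) * (‖c k‖ * (‖w‖) ^ k) := by
    intro k
    rw [show (fun θ => ‖F k θ‖) = fun _ => ‖c k‖ * (‖w‖) ^ k from funext (hnormF k)]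
    rw [integral_const, measureReal_def, hμuniv, smul_eq_mul]
  have hsum : Summable (fun k => ∫ θ, ‖F k θ‖ ∂μ) := by
    simp only [hintnorm]
    exact (summable_norm_poch m (norm_nonneg w) hw).mul_left _
  have hHS := hasSum_integral_of_summable_integral_norm hint hsum
  -- compute each ∫ F k
  have hFk : ∀ k, (∫ θ, F k θ ∂μ) = if k = n then (2*π : ℂ) * (c n * w ^ n) else 0 := by
    intro k
    have h1 : ∀ θ : ℝ, F k θ = (c k * w ^ k) * Complex.exp (Complex.I * ((k:ℤ) - n) * θ) := by
      intro θ
      rw [hF]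
      simp only [mul_pow, ← Complex.exp_nat_mul]
      rw [show Complex.exp (-(Complex.I * n * θ)) * (c k * (w ^ k * Complex.exp ((k:ℂ) * (Complex.I * θ))))
          = c k * w ^ k * (Complex.exp (-(Complex.I * n * θ)) * Complex.exp ((k:ℂ) * (Complex.I * θ))) from by ring,
        ← Complex.exp_add]
      congr 1
      push_cast; ring_nf
    rw [show (fun θ => F k θ) = fun θ : ℝ => (c k * w ^ k) * Complex.exp (Complex.I * ((k:ℤ) - n) * θ)
        from funext h1]
    rw [integral_const_mul]
    have h2 : (∫ θ, Complex.exp (Complex.I * ((k:ℤ) - n) * θ) ∂μ)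
        = if ((k:ℤ) - n) = 0 then (2*π:ℂ) else 0 := by
      rw [← intervalIntegral.integral_of_le (by positivity : (0:ℝ) ≤ 2*π)]
      exact_mod_cast integral_exp_int ((k:ℤ) - n)
    rw [h2]
    by_cases hk : k = n
    · subst hk; simp [mul_comm]
    · rw [if_neg (by omega), if_neg hk, mul_zero]
  have htarget : HasSum (fun k => ∫ θ, F k θ ∂μ) ((2*π : ℂ) * (c n * w ^ n)) := by
    rw [show (fun k => ∫ θ, F k θ ∂μ)
        = fun k => if k = n then (2*π : ℂ) * (c n * w ^ n) else 0 from funext hFk]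
    exact hasSum_ite_eq n _
  have := hHS.unique htarget
  rw [intervalIntegral.integral_of_le (by positivity : (0:ℝ) ≤ 2*π)]
  rw [show (∫ θ in Set.Ioc (0:ℝ) (2*π), Complex.exp (-(Complex.I * n * θ))
        * (1 - w * Complex.exp (Complex.I * θ)) ^ (-m)) = ∫ θ, (∑' k, F k θ) ∂μ from by
    apply integral_congr_ae; filter_upwards with θ
    exact ((hptwise θ).tsum_eq).symm]
  rw [← this]

lemma pointwise_eq (ν : ℤ) (δ : ℕ) (m : ℤ) (hm : ν + m = 1 + δ) (z : ℂ)
    (hz : ‖z‖ < 1) (θ : ℝ) :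
    (((1 - ‖z‖ ^ 2) /
        ‖1 - z * Complex.exp (-(Complex.I * θ))‖ ^ 2 : ℝ) : ℂ) ^ ((m : ℤ) : ℂ)
      * (1 - z * Complex.exp (-(Complex.I * θ))) ^ (-ν)
      * Complex.exp (-(Complex.I * (δ:ℂ) * θ))
    = ((1 - ‖z‖ ^ 2 : ℝ) : ℂ) ^ m *
        (Complex.exp (-(Complex.I * (δ:ℂ) * θ))
          * (1 - z * Complex.exp (-(Complex.I * θ))) ^ (-(1 + (δ:ℤ)))
          * (1 - (starRingEnd ℂ z) * Complex.exp (Complex.I * θ)) ^ (-m)) := by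
  set B : ℂ := 1 - z * Complex.exp (-(Complex.I * θ)) with hB
  have habsx : ‖z * Complex.exp (-(Complex.I * θ))‖ < 1 := by
    rw [norm_mul, Complex.norm_exp]
    simpa using hz
  have hBne : B ≠ 0 := by
    rw [hB, sub_ne_zero]
    intro h
    rw [← h] at habsx
    simp at habsx
  have hconj : (starRingEnd ℂ) B = 1 - (starRingEnd ℂ z) * Complex.exp (Complex.I * θ) := by
    rw [hB, map_sub, map_one, map_mul, ← Complex.exp_conj]
    congr 2
    simp [Complex.ext_iff]
  have habsB : ((‖B‖ ^ 2 : ℝ) : ℂ) = B * (starRingEnd ℂ) B := by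
    rw [Complex.sq_norm, Complex.mul_conj]
  rw [Complex.cpow_intCast, ← hconj]
  rw [Complex.ofReal_div, div_zpow, habsB, mul_zpow]
  rw [div_eq_mul_inv, mul_inv, ← zpow_neg, ← zpow_neg]
  rw [show ((1 - ‖z‖ ^ 2 : ℝ) : ℂ) ^ m * (B ^ (-m) * ((starRingEnd ℂ) B) ^ (-m))
        * B ^ (-ν) * Complex.exp (-(Complex.I * (δ:ℂ) * θ))
      = ((1 - ‖z‖ ^ 2 : ℝ) : ℂ) ^ m * (Complex.exp (-(Complex.I * (δ:ℂ) * θ))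
          * (B ^ (-m) * B ^ (-ν)) * ((starRingEnd ℂ) B) ^ (-m)) from by ring]
  rw [← zpow_add₀ hBne, show -m + -ν = -(1 + (δ:ℤ)) by omega]

lemma comb_id (m : ℤ) (δ j : ℕ) :
    (ascPochhammer ℂ j).eval ((δ:ℂ) + 1) / (j.factorial : ℂ)
      * ((ascPochhammer ℂ (δ + j)).eval ((m:ℤ) : ℂ) / (((δ + j).factorial : ℕ) : ℂ))
    = (ascPochhammer ℂ δ).eval ((m:ℤ) : ℂ) / (δ.factorial : ℂ)
      * ((ascPochhammer ℂ j).eval (((m:ℤ) : ℂ) + δ) / (j.factorial : ℂ)) := by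
  have hsplit : (ascPochhammer ℂ (δ + j)).eval ((m:ℤ) : ℂ)
      = (ascPochhammer ℂ δ).eval ((m:ℤ) : ℂ) * (ascPochhammer ℂ j).eval (((m:ℤ) : ℂ) + δ) := by
    have h := ascPochhammer_mul (S := ℂ) δ j
    have := congrArg (Polynomial.eval ((m:ℤ) : ℂ)) h
    simpa [Polynomial.eval_comp] using this.symm
  rw [coef_pos δ j, hsplit]
  have h4 : ((j + δ).choose δ : ℂ) * (j.factorial : ℂ) * (δ.factorial : ℂ)
      = ((j + δ).factorial : ℂ) := by
    exact_mod_cast Nat.add_choose_mul_factorial_mul_factorial j δ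
  have hjδ : ((δ + j).factorial : ℂ) = ((j + δ).factorial : ℂ) := by rw [Nat.add_comm]
  have hj : (j.factorial : ℂ) ≠ 0 := Nat.cast_ne_zero.2 j.factorial_ne_zero
  have hδ : (δ.factorial : ℂ) ≠ 0 := Nat.cast_ne_zero.2 δ.factorial_ne_zero
  have hjδne : ((j + δ).factorial : ℂ) ≠ 0 := Nat.cast_ne_zero.2 (j + δ).factorial_ne_zero
  rw [hjδ]
  field_simp
  linear_combination (ascPochhammer ℂ δ).eval ((m:ℤ) : ℂ)
    * (ascPochhammer ℂ j).eval (((m:ℤ) : ℂ) + δ) * h4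

lemma term_id (m : ℤ) (δ j : ℕ) (z : ℂ) :
    (ascPochhammer ℂ j).eval ((((1:ℤ) + (δ:ℤ) : ℤ)) : ℂ) / (j.factorial : ℂ) * z ^ j *
      ((2 * (π:ℂ)) * ((ascPochhammer ℂ (j + δ)).eval ((m:ℤ) : ℂ) / ((j + δ).factorial : ℂ)
        * (starRingEnd ℂ z) ^ (j + δ)))
    = ((2 * (π:ℂ)) * (starRingEnd ℂ z) ^ δ
        * ((ascPochhammer ℂ δ).eval ((m:ℤ) : ℂ) / (δ.factorial : ℂ)))
      * ((ascPochhammer ℂ j).eval (((m:ℤ) : ℂ) + δ) / (j.factorial : ℂ)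
        * (z * starRingEnd ℂ z) ^ j) := by
  have h := comb_id m δ j
  rw [show ((((1:ℤ) + (δ:ℤ) : ℤ)) : ℂ) = (δ:ℂ) + 1 by push_cast; ring,
    Nat.add_comm j δ, pow_add, mul_pow]
  linear_combination (2 * (π:ℂ)) * (starRingEnd ℂ z) ^ δ * (starRingEnd ℂ z) ^ j * z ^ j * h

set_option maxHeartbeats 1000000

open MeasureTheory

/-- Szegő-type evaluation of the generalized Poisson transform of the conical
function `ū^δ` on the circle: for `ν ∈ ℤ`, `δ ∈ ℕ`, `σ = 1 + δ − ν` and `|z| < 1`,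
`(1/2π) ∫_0^{2π} ((1−|z|²)/|1−z e^{−iθ}|²)^σ (1−z e^{−iθ})^{−ν} e^{−iδθ} dθ
  = ((σ)_δ/δ!) z̄^δ/(1−|z|²)^δ`. -/
theorem stmt_13 (ν : ℤ) (δ : ℕ) (σ : ℂ) (hσ : σ = 1 + (δ : ℂ) - (ν : ℂ))
    (z : ℂ) (hz : ‖z‖ < 1) :
    (1 / (2 * (Real.pi : ℂ))) *
      ∫ θ in (0 : ℝ)..(2 * Real.pi),
        (((1 - ‖z‖ ^ 2) /
            ‖1 - z * Complex.exp (-(Complex.I * θ))‖ ^ 2 : ℝ) : ℂ) ^ σ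
          * (1 - z * Complex.exp (-(Complex.I * θ))) ^ (-ν)
          * Complex.exp (-(Complex.I * (δ : ℂ) * θ))
    = ((Polynomial.eval σ (ascPochhammer ℂ δ)) / (Nat.factorial δ : ℂ))
        * (starRingEnd ℂ z) ^ δ / (((1 - ‖z‖ ^ 2 : ℝ) : ℂ)) ^ δ := by
  have hr0 : 0 ≤ ‖z‖ := norm_nonneg z
  have hr2 : ‖z‖ ^ 2 < 1 := by nlinarith
  have hαpos : (0:ℝ) < 1 - ‖z‖ ^ 2 := by linarith
  have hαne : ((1 - ‖z‖ ^ 2 : ℝ) : ℂ) ≠ 0 := by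
    exact_mod_cast ne_of_gt hαpos
  set m : ℤ := 1 + δ - ν with hmdef
  have hσm : σ = ((m:ℤ) : ℂ) := by rw [hσ, hmdef]; push_cast; ring
  have hm : ν + m = 1 + δ := by omega
  rw [hσm]
  rw [intervalIntegral.integral_congr (g := fun θ : ℝ =>
      ((1 - ‖z‖ ^ 2 : ℝ) : ℂ) ^ m *
        (Complex.exp (-(Complex.I * (δ:ℂ) * θ))
          * (1 - z * Complex.exp (-(Complex.I * θ))) ^ (-(1 + (δ:ℤ)))
          * (1 - (starRingEnd ℂ z) * Complex.exp (Complex.I * θ)) ^ (-m)))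
    (fun θ _ => pointwise_eq ν δ m hm z hz θ)]
  rw [intervalIntegral.integral_const_mul]
  set μ : Measure ℝ := volume.restrict (Set.Ioc (0:ℝ) (2*π)) with hμ
  set G : ℝ → ℂ := fun θ =>
      Complex.exp (-(Complex.I * (δ:ℂ) * θ))
        * (1 - z * Complex.exp (-(Complex.I * θ))) ^ (-(1 + (δ:ℤ)))
        * (1 - (starRingEnd ℂ z) * Complex.exp (Complex.I * θ)) ^ (-m) with hG
  set a : ℕ → ℂ := fun j =>
      (ascPochhammer ℂ j).eval ((((1:ℤ) + (δ:ℤ) : ℤ)) : ℂ) / (j.factorial : ℂ) with ha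
  set F : ℕ → ℝ → ℂ := fun j θ => (a j * z ^ j) *
      (Complex.exp (-(Complex.I * ((j + δ : ℕ) : ℂ) * θ))
        * (1 - (starRingEnd ℂ z) * Complex.exp (Complex.I * θ)) ^ (-m)) with hF
  have hexp1 : ∀ θ : ℝ, ‖Complex.exp (Complex.I * θ)‖ = 1 := by
    intro θ; rw [Complex.norm_exp]; simp
  have hexp1' : ∀ θ : ℝ, ‖Complex.exp (-(Complex.I * θ))‖ = 1 := by
    intro θ; rw [Complex.norm_exp]; simp
  have habs1 : ∀ θ : ℝ, ‖z * Complex.exp (-(Complex.I * θ))‖ < 1 := by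
    intro θ
    rw [norm_mul]
    rw [hexp1']
    simpa using hz
  have habs2 : ∀ θ : ℝ, ‖(starRingEnd ℂ z) * Complex.exp (Complex.I * θ)‖ < 1 := by
    intro θ
    rw [norm_mul]
    rw [hexp1, Complex.norm_conj]
    simpa using hz
  have hCne : ∀ θ : ℝ, (1 - (starRingEnd ℂ z) * Complex.exp (Complex.I * θ)) ≠ 0 := by
    intro θ
    rw [sub_ne_zero]
    intro h
    have := habs2 θ
    rw [← h] at this
    simp at this
  -- pointwise expansion of G as a series
  have hptG : ∀ θ : ℝ, HasSum (fun j => F j θ) (G θ) := by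
    intro θ
    have h0 := ((lemA (1 + (δ:ℤ)) (habs1 θ)).mul_left
        (Complex.exp (-(Complex.I * (δ:ℂ) * θ)))).mul_right
        ((1 - (starRingEnd ℂ z) * Complex.exp (Complex.I * θ)) ^ (-m))
    have hterm : ∀ j : ℕ,
        Complex.exp (-(Complex.I * (δ:ℂ) * θ)) *
          ((ascPochhammer ℂ j).eval (((1 + (δ:ℤ) : ℤ)) : ℂ) / (j.factorial : ℂ)
            * (z * Complex.exp (-(Complex.I * θ))) ^ j) *
          (1 - (starRingEnd ℂ z) * Complex.exp (Complex.I * θ)) ^ (-m) = F j θ := by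
      intro j
      have e1 : (z * Complex.exp (-(Complex.I * θ))) ^ j
          = z ^ j * Complex.exp ((j:ℂ) * -(Complex.I * θ)) := by
        rw [mul_pow, ← Complex.exp_nat_mul]
      have e2 : Complex.exp (-(Complex.I * ((j + δ : ℕ) : ℂ) * θ))
          = Complex.exp (-(Complex.I * (δ:ℂ) * θ)) * Complex.exp ((j:ℂ) * -(Complex.I * θ)) := by
        rw [← Complex.exp_add]; congr 1; push_cast; ring
      rw [hF]
      simp only
      rw [e1, e2, ha]
      ring
    rw [show (fun j => F j θ) = fun j =>
        Complex.exp (-(Complex.I * (δ:ℂ) * θ)) *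
          ((ascPochhammer ℂ j).eval (((1 + (δ:ℤ) : ℤ)) : ℂ) / (j.factorial : ℂ)
            * (z * Complex.exp (-(Complex.I * θ))) ^ j) *
          (1 - (starRingEnd ℂ z) * Complex.exp (Complex.I * θ)) ^ (-m)
      from funext fun j => (hterm j).symm]
    exact h0
  -- continuity / integrability
  have hcontC : Continuous (fun θ : ℝ =>
      (1 - (starRingEnd ℂ z) * Complex.exp (Complex.I * θ)) ^ (-m)) := by
    apply Continuous.zpow₀
    · exact (continuous_const.sub (continuous_const.mul
        (Complex.continuous_exp.comp (by continuity))))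
    · exact fun θ => Or.inl (hCne θ)
  have hcont : ∀ j, Continuous (F j) := by
    intro j
    apply continuous_const.mul
    exact (Complex.continuous_exp.comp (by continuity)).mul hcontC
  have hint : ∀ j, Integrable (F j) μ := fun j => (hcont j).integrableOn_Ioc
  -- uniform bound for the last factor
  obtain ⟨M, hM⟩ : ∃ M : ℝ, ∀ θ ∈ Set.Icc (0:ℝ) (2*π),
      ‖(1 - (starRingEnd ℂ z) * Complex.exp (Complex.I * θ)) ^ (-m)‖ ≤ M :=
    isCompact_Icc.exists_bound_of_continuousOn (hcontC.continuousOn)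
  have hM0 : 0 ≤ M := le_trans (norm_nonneg _) (hM 0 ⟨le_refl _, by positivity⟩)
  have hμuniv : (μ Set.univ).toReal = 2*π := by
    rw [hμ]
    simp [Real.volume_Ioc, ENNReal.toReal_ofReal (by positivity : (0:ℝ) ≤ 2*π), Real.pi_nonneg]
  have hbound : ∀ j, (∫ θ, ‖F j θ‖ ∂μ) ≤ (2*π*M) * (‖a j‖ * ‖z‖ ^ j) := by
    intro j
    have hle : ∀ θ ∈ Set.Ioc (0:ℝ) (2*π),
        ‖F j θ‖ ≤ ‖a j‖ * ‖z‖ ^ j * M := by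
      intro θ hθ
      rw [hF]
      simp only [norm_mul, norm_pow]
      have h5 : ‖Complex.exp (-(Complex.I * ((j + δ : ℕ) : ℂ) * θ))‖ = 1 := by
        rw [Complex.norm_exp]; simp
      calc ‖a j‖ * ‖z‖ ^ j *
            (‖Complex.exp (-(Complex.I * ((j + δ : ℕ) : ℂ) * θ))‖ *
              ‖(1 - (starRingEnd ℂ z) * Complex.exp (Complex.I * θ)) ^ (-m)‖)
          = ‖a j‖ * ‖z‖ ^ j *
              ‖(1 - (starRingEnd ℂ z) * Complex.exp (Complex.I * θ)) ^ (-m)‖ := by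
            rw [h5, one_mul]
        _ ≤ ‖a j‖ * ‖z‖ ^ j * M := by
            apply mul_le_mul_of_nonneg_left (hM θ ⟨le_of_lt hθ.1, hθ.2⟩)
            positivity
    calc (∫ θ, ‖F j θ‖ ∂μ) ≤ ∫ _θ, (‖a j‖ * ‖z‖ ^ j * M) ∂μ := by
          apply integral_mono_of_nonneg
          · filter_upwards with θ using norm_nonneg _
          · exact integrable_const _
          · filter_upwards [ae_restrict_mem measurableSet_Ioc] with θ hθ using hle θ hθ
      _ = (2*π*M) * (‖a j‖ * ‖z‖ ^ j) := by
          rw [integral_const, measureReal_def, hμuniv, smul_eq_mul]; ring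
  have hsumnorm : Summable (fun j => ∫ θ, ‖F j θ‖ ∂μ) := by
    apply Summable.of_nonneg_of_le
      (fun j => integral_nonneg (fun θ => norm_nonneg _)) hbound
    exact ((summable_norm_poch (1 + (δ:ℤ)) hr0 hz).mul_left (2*π*M))
  have hHS := hasSum_integral_of_summable_integral_norm hint hsumnorm
  have hIG : (∫ θ, G θ ∂μ) = ∫ θ, (∑' j, F j θ) ∂μ := by
    apply integral_congr_ae
    filter_upwards with θ
    exact ((hptG θ).tsum_eq).symm
  -- value of each ∫ F j
  have hFj : ∀ j, (∫ θ, F j θ ∂μ) = (a j * z ^ j) *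
      ((2*π:ℂ) * ((ascPochhammer ℂ (j + δ)).eval ((m:ℤ):ℂ) / (((j + δ).factorial : ℕ) : ℂ)
        * (starRingEnd ℂ z) ^ (j + δ))) := by
    intro j
    rw [hF]
    simp only
    rw [integral_const_mul]
    congr 1
    rw [← intervalIntegral.integral_of_le (by positivity : (0:ℝ) ≤ 2*π)]
    rw [key_inner m (by rw [Complex.norm_conj]; exact hz) (j + δ)]
  -- closed form of the sum
  have habs3 : ‖z * (starRingEnd ℂ z)‖ < 1 := by
    rw [norm_mul]
    simp only [Complex.norm_conj]
    nlinarith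
  have hzconj : (1 : ℂ) - z * (starRingEnd ℂ z) = ((1 - ‖z‖ ^ 2 : ℝ) : ℂ) := by
    rw [Complex.mul_conj, Complex.normSq_eq_norm_sq]
    push_cast
    ring
  have htarget : HasSum (fun j => ∫ θ, F j θ ∂μ)
      (((2*π:ℂ) * (starRingEnd ℂ z) ^ δ
          * ((ascPochhammer ℂ δ).eval ((m:ℤ):ℂ) / (δ.factorial : ℂ)))
        * ((1 - ‖z‖ ^ 2 : ℝ) : ℂ) ^ (-(m + (δ:ℤ)))) := by
    have h1 := (lemA (m + (δ:ℤ)) habs3).mul_left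
      ((2*π:ℂ) * (starRingEnd ℂ z) ^ δ
        * ((ascPochhammer ℂ δ).eval ((m:ℤ):ℂ) / (δ.factorial : ℂ)))
    rw [hzconj] at h1
    have hterm2 : ∀ j, ((2*π:ℂ) * (starRingEnd ℂ z) ^ δ
          * ((ascPochhammer ℂ δ).eval ((m:ℤ):ℂ) / (δ.factorial : ℂ)))
        * ((ascPochhammer ℂ j).eval (((m + (δ:ℤ) : ℤ)) : ℂ) / (j.factorial : ℂ)
            * (z * starRingEnd ℂ z) ^ j)
        = ∫ θ, F j θ ∂μ := by
      intro j
      rw [hFj j, ha]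
      simp only
      rw [show (((m + (δ:ℤ) : ℤ)) : ℂ) = ((m:ℤ):ℂ) + δ by push_cast; ring]
      exact (term_id m δ j z).symm
    rw [show (fun j => ∫ θ, F j θ ∂μ) = fun j => ((2*π:ℂ) * (starRingEnd ℂ z) ^ δ
          * ((ascPochhammer ℂ δ).eval ((m:ℤ):ℂ) / (δ.factorial : ℂ)))
        * ((ascPochhammer ℂ j).eval (((m + (δ:ℤ) : ℤ)) : ℂ) / (j.factorial : ℂ)
            * (z * starRingEnd ℂ z) ^ j) from funext fun j => (hterm2 j).symm]
    exact h1
  have hval : (∫ θ, G θ ∂μ) = ((2*π:ℂ) * (starRingEnd ℂ z) ^ δ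
          * ((ascPochhammer ℂ δ).eval ((m:ℤ):ℂ) / (δ.factorial : ℂ)))
        * ((1 - ‖z‖ ^ 2 : ℝ) : ℂ) ^ (-(m + (δ:ℤ))) := by
    rw [hIG]
    exact (hHS.unique htarget)
  rw [intervalIntegral.integral_of_le (by positivity : (0:ℝ) ≤ 2*π)]
  rw [show (∫ θ in Set.Ioc (0:ℝ) (2*π),
      Complex.exp (-(Complex.I * (δ:ℂ) * θ))
        * (1 - z * Complex.exp (-(Complex.I * θ))) ^ (-(1 + (δ:ℤ)))
        * (1 - (starRingEnd ℂ z) * Complex.exp (Complex.I * θ)) ^ (-m)) = ∫ θ, G θ ∂μ from rfl]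
  rw [hval]
  -- final algebra
  have hπ : (2*(π:ℂ)) ≠ 0 := by
    simp [Real.pi_ne_zero, Complex.ext_iff]
  have hzpow : ((1 - ‖z‖ ^ 2 : ℝ) : ℂ) ^ m
      * ((1 - ‖z‖ ^ 2 : ℝ) : ℂ) ^ (-(m + (δ:ℤ)))
      = (((1 - ‖z‖ ^ 2 : ℝ) : ℂ) ^ δ)⁻¹ := by
    rw [← zpow_add₀ hαne, show m + -(m + (δ:ℤ)) = -(δ:ℤ) by ring, zpow_neg, zpow_natCast]
  rw [show 1 / (2 * (π:ℂ)) * (((1 - ‖z‖ ^ 2 : ℝ) : ℂ) ^ m *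
        (2 * ↑π * (starRingEnd ℂ) z ^ δ
          * (Polynomial.eval ((m:ℤ):ℂ) (ascPochhammer ℂ δ) / (δ.factorial : ℂ))
          * ((1 - ‖z‖ ^ 2 : ℝ) : ℂ) ^ (-(m + (δ:ℤ)))))
      = (2 * ↑π / (2 * ↑π)) * ((Polynomial.eval ((m:ℤ):ℂ) (ascPochhammer ℂ δ) / (δ.factorial : ℂ))
          * (starRingEnd ℂ) z ^ δ
          * (((1 - ‖z‖ ^ 2 : ℝ) : ℂ) ^ m
              * ((1 - ‖z‖ ^ 2 : ℝ) : ℂ) ^ (-(m + (δ:ℤ))))) from by ring]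
  rw [div_self hπ, hzpow, one_mul, div_eq_mul_inv, div_eq_mul_inv]
end

section
/- Let ν ∈ ℤ. Then for every z in the open unit disc, (1/2π) ∫_0^{2π} ((1−|z|²)/|1−z e^{−iθ}|²)^{1−ν} (1−z e^{−iθ})^{−ν} dθ = 1. -/
open Complex Real

lemma aux_one_sub_ne (a b : ℂ) (ha : ‖a‖ < 1) (hb : ‖b‖ = 1) :
    1 - a * b ≠ 0 := by
  intro h
  have h1 : a * b = 1 := by linear_combination -h
  have h2 := congrArg (‖·‖) h1
  rw [norm_mul, hb, mul_one, norm_one] at h2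
  exact absurd h2 (ne_of_lt ha)

/-- The `δ = 0` case of the Szegő-type Poisson integral evaluation: for
`ν ∈ ℤ` and `|z| < 1`,
`(1/2π) ∫_0^{2π} ((1−|z|²)/|1−z e^{−iθ}|²)^{1−ν} (1−z e^{−iθ})^{−ν} dθ = 1`. -/
theorem stmt_14 (ν : ℤ) (z : ℂ) (hz : ‖z‖ < 1) :
    (1 / (2 * (Real.pi : ℂ))) *
      ∫ θ in (0 : ℝ)..(2 * Real.pi),
        (((1 - ‖z‖ ^ 2) /
            ‖1 - z * Complex.exp (-(Complex.I * θ))‖ ^ 2 : ℝ) : ℂ) ^ ((1 : ℤ) - ν)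
          * (1 - z * Complex.exp (-(Complex.I * θ))) ^ (-ν)
    = 1 := by
  have hπ : (Real.pi : ℂ) ≠ 0 := by exact_mod_cast Real.pi_ne_zero
  set c : ℂ := ((1 - ‖z‖ ^ 2 : ℝ) : ℂ) with hc
  have hc0 : c ≠ 0 := by
    rw [hc, Complex.ofReal_ne_zero]
    nlinarith [norm_nonneg z]
  set f : ℂ → ℂ := fun u => (1 - (starRingEnd ℂ) z * u) ^ (ν - 1) with hf
  have hne : ∀ u : ℂ, ‖u‖ ≤ 1 → 1 - (starRingEnd ℂ) z * u ≠ 0 := by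
    intro u hu h
    have h1 : (starRingEnd ℂ) z * u = 1 := by linear_combination -h
    have h2 := congrArg (‖·‖) h1
    rw [norm_mul, Complex.norm_conj, norm_one] at h2
    nlinarith [norm_nonneg z, norm_nonneg u]
  have hdiff : DiffContOnCl ℂ f (Metric.ball 0 1) := by
    apply DifferentiableOn.diffContOnCl
    rw [closure_ball (0 : ℂ) one_ne_zero]
    intro u hu
    apply DifferentiableAt.differentiableWithinAt
    have hu1 : ‖u‖ ≤ 1 := by
      simpa [Complex.dist_eq] using Metric.mem_closedBall.1 hu
    have h1 : DifferentiableAt ℂ (fun w : ℂ => w ^ (ν - 1)) (1 - (starRingEnd ℂ) z * u) :=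
      differentiableAt_zpow.2 (Or.inl (hne u hu1))
    exact h1.comp (f := fun u => 1 - (starRingEnd ℂ) z * u) u (by fun_prop)
  have hmem : z ∈ Metric.ball (0 : ℂ) 1 := by
    simpa [Complex.dist_eq] using hz
  have hkey := hdiff.circleIntegral_sub_inv_smul hmem
  rw [circleIntegral] at hkey
  have hptw : ∀ θ : ℝ,
      (((1 - ‖z‖ ^ 2) /
            ‖1 - z * Complex.exp (-(Complex.I * θ))‖ ^ 2 : ℝ) : ℂ) ^ ((1 : ℤ) - ν)
          * (1 - z * Complex.exp (-(Complex.I * θ))) ^ (-ν)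
        = (c ^ ((1 : ℤ) - ν) * Complex.I⁻¹) •
            (deriv (circleMap 0 1) θ • ((circleMap 0 1 θ - z)⁻¹ • f (circleMap 0 1 θ))) := by
    intro θ
    set u : ℂ := circleMap 0 1 θ with hu
    have huexp : u = Complex.exp (θ * Complex.I) := by simp [hu, circleMap]
    have huabs : ‖u‖ = 1 := by rw [huexp]; exact Complex.norm_exp_ofReal_mul_I θ
    have hu0 : u ≠ 0 := by
      intro h; rw [h] at huabs; simp at huabs
    have huinv : Complex.exp (-(Complex.I * θ)) = u⁻¹ := by
      rw [huexp, ← Complex.exp_neg]; ring_nf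
    have huinvabs : ‖u⁻¹‖ = 1 := by rw [norm_inv, huabs]; norm_num
    set w : ℂ := 1 - z * u⁻¹ with hw
    have hw0 : w ≠ 0 := aux_one_sub_ne z u⁻¹ hz huinvabs
    have hconju : (starRingEnd ℂ) u = u⁻¹ := by
      rw [huexp, ← Complex.exp_conj, ← Complex.exp_neg]
      congr 1
      simp [Complex.conj_ofReal]
    have hwc : (starRingEnd ℂ) w = 1 - (starRingEnd ℂ) z * u := by
      rw [hw]
      simp only [map_sub, map_one, map_mul, map_inv₀, hconju, inv_inv]
    have hwc0 : (starRingEnd ℂ) w ≠ 0 := by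
      rw [hwc]; exact hne u (le_of_eq huabs)
    have huz : u - z ≠ 0 := by
      intro h
      have : u = z := by linear_combination h
      rw [this] at huabs
      exact absurd huabs (ne_of_lt hz)
    have habs2 : ((‖w‖ : ℝ) : ℂ) ^ 2 = w * (starRingEnd ℂ) w := by
      rw [Complex.mul_conj, Complex.normSq_eq_norm_sq]
      push_cast; ring
    have hwinv : w⁻¹ = u * (u - z)⁻¹ := by
      rw [hw]
      field_simp
    rw [huinv]
    rw [show (((1 - ‖z‖ ^ 2) / ‖1 - z * u⁻¹‖ ^ 2 : ℝ) : ℂ)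
        = c / ((‖w‖ : ℝ) : ℂ) ^ 2 by push_cast [hw, hc]; ring]
    rw [habs2]
    rw [deriv_circleMap, ← hu]
    simp only [smul_eq_mul, hf]
    rw [← hwc]
    calc (c / (w * (starRingEnd ℂ) w)) ^ (1 - ν) * w ^ (-ν)
        = c ^ (1-ν) * ((w * (starRingEnd ℂ) w) ^ (1-ν))⁻¹ * w ^ (-ν) := by
          rw [div_zpow, div_eq_mul_inv]
      _ = c ^ (1-ν) * (w * (starRingEnd ℂ) w) ^ (ν-1) * w ^ (-ν) := by
          rw [← zpow_neg, neg_sub]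
      _ = c ^ (1-ν) * (w ^ (ν-1) * w ^ (-ν)) * ((starRingEnd ℂ) w) ^ (ν-1) := by
          rw [mul_zpow]; ring
      _ = c ^ (1-ν) * w⁻¹ * ((starRingEnd ℂ) w) ^ (ν-1) := by
          rw [← zpow_add₀ hw0, show ν - 1 + -ν = -1 by ring, zpow_neg_one]
      _ = c ^ (1-ν) * (u * (u-z)⁻¹) * ((starRingEnd ℂ) w) ^ (ν-1) := by rw [hwinv]
      _ = c ^ (1 - ν) * Complex.I⁻¹ * (u * Complex.I * ((u - z)⁻¹ * ((starRingEnd ℂ) w) ^ (ν - 1))) := by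
          field_simp [Complex.I_ne_zero]
  rw [intervalIntegral.integral_congr (g := fun θ => (c ^ ((1:ℤ) - ν) * Complex.I⁻¹) •
      (deriv (circleMap 0 1) θ • ((circleMap 0 1 θ - z)⁻¹ • f (circleMap 0 1 θ))))
      (fun θ _ => hptw θ)]
  rw [intervalIntegral.integral_smul, hkey]
  have hfz : f z = c ^ (ν - 1) := by
    rw [hf, hc]
    rw [← Complex.normSq_eq_norm_sq]
    push_cast [← Complex.mul_conj]
    ring
  rw [hfz]
  simp only [smul_eq_mul]
  rw [show c ^ ((1:ℤ) - ν) * Complex.I⁻¹ * (2 * ↑Real.pi * Complex.I * c ^ (ν - 1))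
      = (c ^ ((1:ℤ) - ν) * c ^ (ν - 1)) * (Complex.I⁻¹ * Complex.I) * (2 * ↑Real.pi) by ring]
  rw [← zpow_add₀ hc0, inv_mul_cancel₀ Complex.I_ne_zero]
  norm_num
  field_simp
end

section
/- Let α > −1 be real and δ ∈ ℕ. The function f(z) = z̄^δ (1−|z|²)^{−δ} on the open unit disc D belongs to L²(D, (1−|z|²)^α dA(z)) (dA Lebesgue area measure) if and only if 2δ < α + 1. -/
open Complex MeasureTheory
open Set Metric
open scoped ENNReal

lemma lintegral_radial (H : ℝ → ℝ≥0∞) (hH : Measurable H) :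
    ∫⁻ z : ℂ, H ‖z‖ = (volume : Measure ℂ).toSphere univ * ∫⁻ r in Ioi (0:ℝ), ENNReal.ofReal r * H r := by
  have hdim : Module.finrank ℝ ℂ = 2 := Complex.finrank_real_complex
  have h1 : ∫⁻ z : ℂ, H ‖z‖
      = ∫⁻ x : ({(0:ℂ)}ᶜ : Set ℂ), H ‖(x : ℂ)‖ ∂((volume : Measure ℂ).comap (↑)) := by
    rw [lintegral_subtype_comap (measurableSet_singleton (0:ℂ)).compl (fun z => H ‖z‖),
      restrict_compl_singleton]
  have h2 : ∫⁻ x : ({(0:ℂ)}ᶜ : Set ℂ), H ‖(x : ℂ)‖ ∂((volume : Measure ℂ).comap (↑))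
      = ∫⁻ p : sphere (0:ℂ) 1 × Ioi (0:ℝ), H p.2
        ∂((volume : Measure ℂ).toSphere.prod (Measure.volumeIoiPow 1)) := by
    have := (Measure.measurePreserving_homeomorphUnitSphereProd (volume : Measure ℂ)).lintegral_comp
      (f := fun p : sphere (0:ℂ) 1 × Ioi (0:ℝ) => H p.2)
      (hH.comp (measurable_subtype_coe.comp measurable_snd))
    rw [hdim] at this
    rw [← this]
    simp
  have h3 : ∫⁻ p : sphere (0:ℂ) 1 × Ioi (0:ℝ), H p.2
        ∂((volume : Measure ℂ).toSphere.prod (Measure.volumeIoiPow 1))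
      = (volume : Measure ℂ).toSphere univ * ∫⁻ y : Ioi (0:ℝ), H y ∂(Measure.volumeIoiPow 1) := by
    rw [lintegral_prod (f := fun p : sphere (0:ℂ) 1 × Ioi (0:ℝ) => H p.2)
      ((hH.comp (measurable_subtype_coe.comp measurable_snd)).aemeasurable)]
    simp [lintegral_const, mul_comm]
  have h4 : ∫⁻ y : Ioi (0:ℝ), H y ∂(Measure.volumeIoiPow 1)
      = ∫⁻ r in Ioi (0:ℝ), ENNReal.ofReal r * H r := by
    rw [Measure.volumeIoiPow]
    rw [lintegral_withDensity_eq_lintegral_mul _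
        ((measurable_subtype_coe.pow_const 1).ennreal_ofReal)
        (g := fun y : Ioi (0:ℝ) => H y) (hH.comp measurable_subtype_coe)]
    simp only [Pi.mul_apply]
    rw [lintegral_subtype_comap measurableSet_Ioi (fun r => ENNReal.ofReal (r ^ 1) * H r)]
    simp
  rw [h1, h2, h3, h4]

lemma lintegral_radial_ball (H : ℝ → ℝ≥0∞) (hH : Measurable H) :
    ∫⁻ z in ball (0:ℂ) 1, H ‖z‖
      = (volume : Measure ℂ).toSphere univ * ∫⁻ r in Ioo (0:ℝ) 1, ENNReal.ofReal r * H r := by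
  have h := lintegral_radial (fun r => (Iio (1:ℝ)).indicator H r)
    (hH.indicator measurableSet_Iio)
  have hL : ∫⁻ z : ℂ, (Iio (1:ℝ)).indicator H ‖z‖ = ∫⁻ z in ball (0:ℂ) 1, H ‖z‖ := by
    rw [← lintegral_indicator measurableSet_ball]
    congr 1
    funext z
    by_cases hz : z ∈ ball (0:ℂ) 1
    · rw [Set.indicator_of_mem hz]
      rw [Set.indicator_of_mem (by simpa [mem_ball_zero_iff] using hz)]
    · rw [Set.indicator_of_notMem hz, Set.indicator_of_notMem
        (by simpa [mem_ball_zero_iff] using hz)]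
  have hR : ∫⁻ r in Ioi (0:ℝ), ENNReal.ofReal r * (Iio (1:ℝ)).indicator H r
      = ∫⁻ r in Ioo (0:ℝ) 1, ENNReal.ofReal r * H r := by
    have : ∀ r : ℝ, ENNReal.ofReal r * (Iio (1:ℝ)).indicator H r
        = (Iio (1:ℝ)).indicator (fun r => ENNReal.ofReal r * H r) r := by
      intro r
      by_cases hr : r ∈ Iio (1:ℝ) <;> simp [Set.indicator_of_mem, Set.indicator_of_notMem, hr]
    simp_rw [this]
    rw [lintegral_indicator measurableSet_Iio, Measure.restrict_restrict measurableSet_Iio,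
      Set.Iio_inter_Ioi]
  rw [hL, hR] at h
  exact h

lemma integrableOn_one_sub_rpow_iff (s : ℝ) {a : ℝ} (ha : 0 ≤ a) (ha1 : a < 1) :
    IntegrableOn (fun r : ℝ => (1 - r) ^ s) (Ioo a 1) volume ↔
      IntegrableOn (fun u : ℝ => u ^ s) (Ioo (0:ℝ) (1 - a)) volume := by
  rw [← intervalIntegrable_iff_integrableOn_Ioo_of_le ha1.le,
      ← intervalIntegrable_iff_integrableOn_Ioo_of_le (by linarith : (0:ℝ) ≤ 1 - a)]
  constructor
  · intro h
    have h2 := (h.comp_sub_left 1).symm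
    simp only [sub_sub_cancel] at h2
    simpa using h2
  · intro h
    have h2 := (h.comp_sub_left 1).symm
    simp only [sub_zero, sub_sub_cancel] at h2
    exact h2

lemma oneD (n : ℕ) (s : ℝ) :
    IntegrableOn (fun r : ℝ => r ^ n * (1 - r ^ 2) ^ s) (Ioo (0:ℝ) 1) volume ↔ -1 < s := by
  have hmeas : Measurable fun r : ℝ => r ^ n * (1 - r ^ 2) ^ s := by fun_prop
  constructor
  · intro h
    set c : ℝ := (1/2 : ℝ) ^ n * min ((2:ℝ) ^ s) 1 with hc
    have hcpos : 0 < c := by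
      apply mul_pos (by positivity)
      exact lt_min (Real.rpow_pos_of_pos two_pos s) one_pos
    have h2 : IntegrableOn (fun r : ℝ => r ^ n * (1 - r ^ 2) ^ s) (Ioo (1/2 : ℝ) 1) volume :=
      h.mono_set (Set.Ioo_subset_Ioo (by norm_num) le_rfl)
    have h3 : IntegrableOn (fun r : ℝ => (1 - r) ^ s) (Ioo (1/2 : ℝ) 1) volume := by
      apply Integrable.mono' (h2.const_mul c⁻¹)
        (by fun_prop : Measurable fun r : ℝ => (1 - r) ^ s).aestronglyMeasurable
      filter_upwards [ae_restrict_mem measurableSet_Ioo] with r hr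
      have hr0 : (0:ℝ) ≤ r := by linarith [hr.1]
      have hr1 : (0:ℝ) < 1 - r := by linarith [hr.2]
      rw [Real.norm_eq_abs, _root_.abs_of_nonneg (Real.rpow_nonneg hr1.le s)]
      rw [← inv_mul_le_iff₀ (by positivity : (0:ℝ) < c⁻¹), inv_inv]
      have hsplit : (1 - r ^ 2 : ℝ) = (1 - r) * (1 + r) := by ring
      rw [hsplit, Real.mul_rpow hr1.le (by linarith : (0:ℝ) ≤ 1 + r)]
      have hrn : (1/2 : ℝ) ^ n ≤ r ^ n := pow_le_pow_left₀ (by norm_num) hr.1.le n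
      have hone : min ((2:ℝ) ^ s) 1 ≤ (1 + r) ^ s := by
        rcases le_or_gt 0 s with hs | hs
        · exact le_trans (min_le_right _ _) (Real.one_le_rpow (by linarith) hs)
        · refine le_trans (min_le_left _ _) ?_
          exact Real.rpow_le_rpow_of_nonpos (by linarith) (by linarith [hr.2]) hs.le
      have hA : c ≤ r ^ n * (1 + r) ^ s :=
        mul_le_mul hrn hone (le_min (Real.rpow_pos_of_pos two_pos s).le zero_le_one)
          (pow_nonneg hr0 n)
      calc c * (1 - r) ^ s ≤ (r ^ n * (1 + r) ^ s) * (1 - r) ^ s :=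
            mul_le_mul_of_nonneg_right hA (Real.rpow_nonneg hr1.le s)
        _ = r ^ n * ((1 - r) ^ s * (1 + r) ^ s) := by ring
    rw [integrableOn_one_sub_rpow_iff s (by norm_num) (by norm_num)] at h3
    norm_num at h3
    exact (intervalIntegral.integrableOn_Ioo_rpow_iff (by norm_num : (0:ℝ) < 1/2)).1 h3
  · intro hs
    set C : ℝ := max ((2:ℝ) ^ s) 1 with hC
    have hbase : IntegrableOn (fun r : ℝ => (1 - r) ^ s) (Ioo (0:ℝ) 1) volume := by
      rw [integrableOn_one_sub_rpow_iff s le_rfl one_pos]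
      simpa using (intervalIntegral.integrableOn_Ioo_rpow_iff one_pos).2 hs
    apply Integrable.mono' (hbase.const_mul C) hmeas.aestronglyMeasurable
    filter_upwards [ae_restrict_mem measurableSet_Ioo] with r hr
    have hr1 : (0:ℝ) < 1 - r := by linarith [hr.2]
    have hr2 : (0:ℝ) < 1 - r ^ 2 := by nlinarith [hr.1, hr.2]
    rw [Real.norm_eq_abs, _root_.abs_of_nonneg
      (mul_nonneg (pow_nonneg hr.1.le n) (Real.rpow_nonneg hr2.le s))]
    have hsplit : (1 - r ^ 2 : ℝ) = (1 - r) * (1 + r) := by ring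
    rw [hsplit, Real.mul_rpow hr1.le (by linarith [hr.1] : (0:ℝ) ≤ 1 + r)]
    have hrn : r ^ n ≤ 1 := pow_le_one₀ hr.1.le hr.2.le
    have hone : (1 + r) ^ s ≤ C := by
      rcases le_or_gt 0 s with hsn | hsn
      · exact le_trans (Real.rpow_le_rpow (by linarith [hr.1]) (by linarith [hr.2]) hsn)
          (le_max_left _ _)
      · exact le_trans (Real.rpow_le_one_of_one_le_of_nonpos (by linarith [hr.1]) hsn.le)
          (le_max_right _ _)
    have hA : r ^ n * (1 + r) ^ s ≤ 1 * C :=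
      mul_le_mul hrn hone (Real.rpow_nonneg (by linarith [hr.1]) s) zero_le_one
    calc r ^ n * ((1 - r) ^ s * (1 + r) ^ s)
        = (r ^ n * (1 + r) ^ s) * (1 - r) ^ s := by ring
      _ ≤ (1 * C) * (1 - r) ^ s :=
            mul_le_mul_of_nonneg_right hA (Real.rpow_nonneg hr1.le s)
      _ = C * (1 - r) ^ s := by ring

/-- The function `f(z) = z̄^δ (1−|z|²)^{−δ}` on the unit disc belongs to
`L²(D, (1−|z|²)^α dA)` iff `2δ < α + 1`. -/
theorem stmt_15 (α : ℝ) (hα : -1 < α) (δ : ℕ) :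
    MeasureTheory.IntegrableOn
      (fun z : ℂ =>
        ‖(starRingEnd ℂ z) ^ δ * (((1 - ‖z‖ ^ 2 : ℝ) : ℂ)) ^ (-(δ : ℤ))‖ ^ 2
          * (1 - ‖z‖ ^ 2) ^ α)
      (Metric.ball (0 : ℂ) 1) MeasureTheory.volume
    ↔ 2 * (δ : ℝ) < α + 1 := by
  set F : ℝ → ℝ := fun r => (r ^ δ * |1 - r ^ 2| ^ (-(δ:ℤ))) ^ 2 * (1 - r ^ 2) ^ α with hF
  have hFmeas : Measurable F := by fun_prop
  have hg : ∀ z : ℂ,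
      ‖(starRingEnd ℂ z) ^ δ * (((1 - ‖z‖ ^ 2 : ℝ) : ℂ)) ^ (-(δ : ℤ))‖ ^ 2
        * (1 - ‖z‖ ^ 2) ^ α = F ‖z‖ := by
    intro z
    simp only [hF, norm_mul, norm_pow, norm_zpow, Complex.norm_conj,
      Complex.norm_real, Real.norm_eq_abs]
  have hgeq : (fun z : ℂ =>
      ‖(starRingEnd ℂ z) ^ δ * (((1 - ‖z‖ ^ 2 : ℝ) : ℂ)) ^ (-(δ : ℤ))‖ ^ 2
        * (1 - ‖z‖ ^ 2) ^ α) = fun z : ℂ => F ‖z‖ := funext hg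
  rw [hgeq]
  -- nonnegativity facts
  have hFnn : ∀ r : ℝ, 0 ≤ r → r < 1 → 0 ≤ F r := by
    intro r hr0 hr1
    have h1 : (0:ℝ) < 1 - r ^ 2 := by nlinarith
    exact mul_nonneg (sq_nonneg _) (Real.rpow_nonneg h1.le α)
  -- step 1 : integrability on the ball iff finiteness of lintegral
  have key1 : IntegrableOn (fun z : ℂ => F ‖z‖) (ball (0:ℂ) 1) volume ↔
      ∫⁻ z in ball (0:ℂ) 1, ENNReal.ofReal (F ‖z‖) < ⊤ := by
    have hnn : 0 ≤ᵐ[volume.restrict (ball (0:ℂ) 1)] fun z : ℂ => F ‖z‖ := by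
      filter_upwards [ae_restrict_mem measurableSet_ball] with z hz
      exact hFnn ‖z‖ (norm_nonneg z) (mem_ball_zero_iff.1 hz)
    constructor
    · intro h
      exact (hasFiniteIntegral_iff_ofReal hnn).1 h.2
    · intro h
      exact ⟨(hFmeas.comp measurable_norm).aestronglyMeasurable,
        (hasFiniteIntegral_iff_ofReal hnn).2 h⟩
  have key2 : IntegrableOn (fun r : ℝ => r * F r) (Ioo (0:ℝ) 1) volume ↔
      ∫⁻ r in Ioo (0:ℝ) 1, ENNReal.ofReal (r * F r) < ⊤ := by
    have hnn : 0 ≤ᵐ[volume.restrict (Ioo (0:ℝ) 1)] fun r : ℝ => r * F r := by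
      filter_upwards [ae_restrict_mem measurableSet_Ioo] with r hr
      exact mul_nonneg hr.1.le (hFnn r hr.1.le hr.2)
    constructor
    · intro h
      exact (hasFiniteIntegral_iff_ofReal hnn).1 h.2
    · intro h
      exact ⟨(measurable_id.mul hFmeas).aestronglyMeasurable,
        (hasFiniteIntegral_iff_ofReal hnn).2 h⟩
  have hlin : ∫⁻ z in ball (0:ℂ) 1, ENNReal.ofReal (F ‖z‖)
      = (volume : Measure ℂ).toSphere univ
          * ∫⁻ r in Ioo (0:ℝ) 1, ENNReal.ofReal r * ENNReal.ofReal (F r) :=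
    lintegral_radial_ball (fun r => ENNReal.ofReal (F r)) hFmeas.ennreal_ofReal
  have hlin2 : ∫⁻ r in Ioo (0:ℝ) 1, ENNReal.ofReal (r * F r)
      = ∫⁻ r in Ioo (0:ℝ) 1, ENNReal.ofReal r * ENNReal.ofReal (F r) := by
    refine setLIntegral_congr_fun measurableSet_Ioo (fun r hr => ?_)
    rw [ENNReal.ofReal_mul hr.1.le]
  have hc0 : (volume : Measure ℂ).toSphere univ ≠ 0 := by
    rw [Measure.toSphere_apply_univ]
    refine mul_ne_zero ?_ (measure_ball_pos _ _ one_pos).ne'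
    simp [Complex.finrank_real_complex]
  have hctop : (volume : Measure ℂ).toSphere univ ≠ ⊤ := measure_ne_top _ _
  have hmul : ∀ I : ℝ≥0∞, (volume : Measure ℂ).toSphere univ * I < ⊤ ↔ I < ⊤ := by
    intro I
    constructor
    · intro h
      by_contra h'
      rw [not_lt, top_le_iff] at h'
      rw [h', ENNReal.mul_top hc0] at h
      exact absurd h (lt_irrefl _)
    · intro h
      exact ENNReal.mul_lt_top hctop.lt_top h
  have step : IntegrableOn (fun z : ℂ => F ‖z‖) (ball (0:ℂ) 1) volume ↔
      IntegrableOn (fun r : ℝ => r * F r) (Ioo (0:ℝ) 1) volume := by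
    rw [key1, key2, hlin, hlin2, hmul]
  rw [step]
  -- identify the 1D integrand
  have hcong : IntegrableOn (fun r : ℝ => r * F r) (Ioo (0:ℝ) 1) volume ↔
      IntegrableOn (fun r : ℝ => r ^ (2*δ+1) * (1 - r ^ 2) ^ (α - 2*(δ:ℝ))) (Ioo (0:ℝ) 1)
        volume := by
    refine integrableOn_congr_fun (fun r hr => ?_) measurableSet_Ioo
    have h1 : (0:ℝ) < 1 - r ^ 2 := by nlinarith [hr.1, hr.2]
    have h2 : (1 - r^2) ^ (-(δ:ℤ)) = (1 - r^2) ^ (-(δ:ℝ)) := by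
      rw [← Real.rpow_intCast (1 - r^2) (-(δ:ℤ))]
      norm_num
    have h3 : ((1 - r^2) ^ (-(δ:ℝ))) ^ (2:ℕ) = (1 - r^2) ^ (-(2*(δ:ℝ))) := by
      rw [← Real.rpow_natCast ((1 - r^2) ^ (-(δ:ℝ))) 2, ← Real.rpow_mul h1.le]
      norm_num
      ring_nf
    have h4 : (1 - r^2) ^ (-(2*(δ:ℝ))) * (1 - r^2) ^ α = (1 - r^2) ^ (α - 2*(δ:ℝ)) := by
      rw [← Real.rpow_add h1]
      ring_nf
    simp only [hF, abs_of_pos h1, h2, mul_pow, h3]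
    calc r * ((r ^ δ) ^ 2 * (1 - r^2) ^ (-(2*(δ:ℝ))) * (1 - r^2) ^ α)
        = (r * (r ^ δ) ^ 2) * ((1 - r^2) ^ (-(2*(δ:ℝ))) * (1 - r^2) ^ α) := by ring
      _ = r ^ (2*δ+1) * (1 - r^2) ^ (α - 2*(δ:ℝ)) := by
          rw [h4]
          congr 1
          ring
  rw [hcong, oneD (2*δ+1) (α - 2*(δ:ℝ))]
  constructor <;> intro h <;> linarith
end
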